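/- arXiv:1112.3152 — 4 statements merged into one kernel-verified Lean document; each statement's English description precedes it below -/
import Mathlib

section
/- Let u, Ψ : ℝ² → ℝ² be C¹ vector fields that are both divergence free (∂₁u₁ + ∂₂u₂ = 0 and ∂₁Ψ₁ + ∂₂Ψ₂ = 0). Then pointwise one has u · ((u·∇)Ψ) = u^⊥ · ∇(Ψ^⊥ · u) + Ψ · ∇(½|u|²), where for a vector x = (x₁,x₂) we write x^⊥ = (−x₂, x₁). -/
private lemma dir_decomp (f : ℝ × ℝ → ℝ) (x v : ℝ × ℝ) :
    fderiv ℝ f x v = v.1 * fderiv ℝ f x (1, 0) + v.2 * fderiv ℝ f x (0, 1) := by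
  have h : v = v.1 • ((1 : ℝ), (0 : ℝ)) + v.2 • ((0 : ℝ), (1 : ℝ)) := by
    simp [Prod.ext_iff]
  conv_lhs => rw [h]
  rw [map_add, map_smul, map_smul, smul_eq_mul, smul_eq_mul]

/-- For C¹ divergence-free vector fields `u, Ψ : ℝ² → ℝ²`, pointwise
`u · ((u·∇)Ψ) = u^⊥ · ∇(Ψ^⊥ · u) + Ψ · ∇(½|u|²)`. -/
theorem stmt_0 (u Ψ : ℝ × ℝ → ℝ × ℝ)
    (hu : ContDiff ℝ 1 u) (hΨ : ContDiff ℝ 1 Ψ)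
    (hdivu : ∀ x, fderiv ℝ (fun y => (u y).1) x (1, 0)
      + fderiv ℝ (fun y => (u y).2) x (0, 1) = 0)
    (hdivΨ : ∀ x, fderiv ℝ (fun y => (Ψ y).1) x (1, 0)
      + fderiv ℝ (fun y => (Ψ y).2) x (0, 1) = 0)
    (x : ℝ × ℝ) :
    (u x).1 * fderiv ℝ (fun y => (Ψ y).1) x (u x)
      + (u x).2 * fderiv ℝ (fun y => (Ψ y).2) x (u x)
    = fderiv ℝ (fun y => (-(Ψ y).2) * (u y).1 + (Ψ y).1 * (u y).2) x (-(u x).2, (u x).1)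
      + fderiv ℝ (fun y => ((u y).1 ^ 2 + (u y).2 ^ 2) / 2) x (Ψ x) := by
  have hu1 : DifferentiableAt ℝ (fun y => (u y).1) x :=
    ((hu.differentiable one_ne_zero).fst x)
  have hu2 : DifferentiableAt ℝ (fun y => (u y).2) x :=
    ((hu.differentiable one_ne_zero).snd x)
  have hp : DifferentiableAt ℝ (fun y => (Ψ y).1) x :=
    ((hΨ.differentiable one_ne_zero).fst x)
  have hq : DifferentiableAt ℝ (fun y => (Ψ y).2) x :=
    ((hΨ.differentiable one_ne_zero).snd x)
  have H1 := ((hq.hasFDerivAt.neg.mul hu1.hasFDerivAt).add (hp.hasFDerivAt.mul hu2.hasFDerivAt))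
  have H2 := (((hu1.hasFDerivAt.mul hu1.hasFDerivAt).add
    (hu2.hasFDerivAt.mul hu2.hasFDerivAt)).const_mul ((2:ℝ)⁻¹))
  have hfe : (fun y => ((u y).1 ^ 2 + (u y).2 ^ 2) / 2)
      = fun y => (2:ℝ)⁻¹ * ((u y).1 * (u y).1 + (u y).2 * (u y).2) := by
    funext y; ring
  rw [hfe]
  rw [HasFDerivAt.fderiv (f := fun y => (-(Ψ y).2) * (u y).1 + (Ψ y).1 * (u y).2) H1,
    HasFDerivAt.fderiv (f := fun y => (2:ℝ)⁻¹ * ((u y).1 * (u y).1 + (u y).2 * (u y).2)) H2]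
  simp only [ContinuousLinearMap.add_apply, ContinuousLinearMap.smul_apply,
    ContinuousLinearMap.neg_apply, ContinuousLinearMap.coe_smul', Pi.smul_apply,
    smul_eq_mul, Pi.neg_apply]
  rw [dir_decomp (fun y => (Ψ y).1) x (u x), dir_decomp (fun y => (Ψ y).2) x (u x),
    dir_decomp (fun y => (u y).1) x (-(u x).2, (u x).1),
    dir_decomp (fun y => (u y).2) x (-(u x).2, (u x).1),
    dir_decomp (fun y => (Ψ y).1) x (-(u x).2, (u x).1),
    dir_decomp (fun y => (Ψ y).2) x (-(u x).2, (u x).1),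
    dir_decomp (fun y => (u y).1) x (Ψ x), dir_decomp (fun y => (u y).2) x (Ψ x)]
  simp only [neg_mul, mul_neg]
  linear_combination (((u x).1 ^ 2 + (u x).2 ^ 2)) * hdivΨ x
    - ((u x).1 * (Ψ x).1 + (u x).2 * (Ψ x).2) * hdivu x
end

section
/- Let X be a locally compact metric space. Let (μ_ε) be a sequence of (signed) bounded Radon measures on X converging weak-* to μ, and (ν_ε) a sequence of nonnegative bounded Radon measures converging weak-* to ν, with |μ_ε| ≤ ν_ε for every ε. Let F ⊆ X be closed with ν(F) = 0, and let f : X → ℝ be a bounded Borel function, tending to 0 at infinity, and continuous on X ∖ F. Then ∫_X f dμ_ε → ∫_X f dμ. -/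
open MeasureTheory Filter Topology

/-- Integral of a real function against a finite signed measure, via the Jordan
decomposition. -/
noncomputable def signedIntegral {X : Type*} [MeasurableSpace X]
    (s : MeasureTheory.SignedMeasure X) (f : X → ℝ) : ℝ :=
  (∫ x, f x ∂ s.toJordanDecomposition.posPart)
    - ∫ x, f x ∂ s.toJordanDecomposition.negPart

open Set
open scoped ENNReal

section Aux
variable {X : Type*} [MeasurableSpace X]

lemma aux_integrable_of_bdd {m : Measure X} [IsFiniteMeasure m] {φ : X → ℝ}
    (hm : AEStronglyMeasurable φ m) {C : ℝ} (hC : ∀ x, |φ x| ≤ C) : Integrable φ m :=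
  (integrable_const C).mono' hm (Eventually.of_forall (by simpa [Real.norm_eq_abs] using hC))

lemma aux_tv_finite (s : SignedMeasure X) : IsFiniteMeasure s.totalVariation := by
  unfold MeasureTheory.SignedMeasure.totalVariation
  infer_instance

lemma aux_pos_le_tv (s : SignedMeasure X) :
    s.toJordanDecomposition.posPart ≤ s.totalVariation :=
  Measure.le_add_right le_rfl

lemma aux_neg_le_tv (s : SignedMeasure X) :
    s.toJordanDecomposition.negPart ≤ s.totalVariation :=
  Measure.le_add_left le_rfl

lemma signedIntegral_abs_le (s : SignedMeasure X) (νm : Measure X) [IsFiniteMeasure νm]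
    (hs : s.totalVariation ≤ νm) {φ : X → ℝ} (hφi : Integrable φ νm) :
    |signedIntegral s φ| ≤ ∫ x, |φ x| ∂νm := by
  have hip : Integrable φ s.toJordanDecomposition.posPart :=
    hφi.mono_measure ((aux_pos_le_tv s).trans hs)
  have hiq : Integrable φ s.toJordanDecomposition.negPart :=
    hφi.mono_measure ((aux_neg_le_tv s).trans hs)
  have h1 : |signedIntegral s φ| ≤
      (∫ x, |φ x| ∂s.toJordanDecomposition.posPart)
        + ∫ x, |φ x| ∂s.toJordanDecomposition.negPart := by
    refine (abs_sub _ _).trans (add_le_add ?_ ?_) <;>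
      simpa [Real.norm_eq_abs] using norm_integral_le_integral_norm (μ := _) φ
  have h2 : (∫ x, |φ x| ∂s.toJordanDecomposition.posPart)
        + ∫ x, |φ x| ∂s.toJordanDecomposition.negPart = ∫ x, |φ x| ∂s.totalVariation := by
    rw [MeasureTheory.SignedMeasure.totalVariation, integral_add_measure hip.abs hiq.abs]
  refine h1.trans (h2.le.trans ?_)
  exact integral_mono_measure hs (Eventually.of_forall fun x => abs_nonneg _) hφi.abs

lemma signedIntegral_sub_eq (s : SignedMeasure X) (νm : Measure X) [IsFiniteMeasure νm]
    (hs : s.totalVariation ≤ νm) {φ ψ : X → ℝ} (hφi : Integrable φ νm) (hψi : Integrable ψ νm) :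
    signedIntegral s φ - signedIntegral s ψ = signedIntegral s (fun x => φ x - ψ x) := by
  have hip : Integrable φ s.toJordanDecomposition.posPart :=
    hφi.mono_measure ((aux_pos_le_tv s).trans hs)
  have hiq : Integrable φ s.toJordanDecomposition.negPart :=
    hφi.mono_measure ((aux_neg_le_tv s).trans hs)
  have hip' : Integrable ψ s.toJordanDecomposition.posPart :=
    hψi.mono_measure ((aux_pos_le_tv s).trans hs)
  have hiq' : Integrable ψ s.toJordanDecomposition.negPart :=
    hψi.mono_measure ((aux_neg_le_tv s).trans hs)
  simp only [signedIntegral, integral_sub hip hip', integral_sub hiq hiq']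
  ring

lemma signedIntegral_diff_abs_le (s : SignedMeasure X) (νm : Measure X) [IsFiniteMeasure νm]
    (hs : s.totalVariation ≤ νm) {φ ψ : X → ℝ} (hφi : Integrable φ νm) (hψi : Integrable ψ νm) :
    |signedIntegral s φ - signedIntegral s ψ| ≤ ∫ x, |φ x - ψ x| ∂νm := by
  rw [signedIntegral_sub_eq s νm hs hφi hψi]
  exact signedIntegral_abs_le s νm hs (hφi.sub hψi)

end Aux

open scoped ENNReal

section Aux2
variable {X : Type*} [MeasurableSpace X] [TopologicalSpace X] [OpensMeasurableSpace X]

lemma aux_meas_le_integral {m : Measure X} [IsFiniteMeasure m] {g : X → ℝ} {s : Set X}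
    (hs : MeasurableSet s) (hgi : Integrable g m) (h1 : ∀ x ∈ s, 1 ≤ g x)
    (h0 : ∀ x, 0 ≤ g x) : (m s).toReal ≤ ∫ x, g x ∂m := by
  rw [← measureReal_def, ← integral_indicator_one hs]
  refine integral_mono ((integrable_const (1:ℝ)).indicator hs) hgi fun x => ?_
  by_cases hx : x ∈ s
  · simpa [indicator_of_mem hx] using h1 x hx
  · simpa [indicator_of_notMem hx] using h0 x

lemma aux_integral_le_meas {m : Measure X} [IsFiniteMeasure m] {g : X → ℝ} {s : Set X}
    (hs : MeasurableSet s) (hgi : Integrable g m) (h1 : ∀ x, g x ≤ 1)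
    (h0 : ∀ x ∉ s, g x ≤ 0) : ∫ x, g x ∂m ≤ (m s).toReal := by
  rw [← measureReal_def, ← integral_indicator_one hs]
  refine integral_mono hgi ((integrable_const (1:ℝ)).indicator hs) fun x => ?_
  by_cases hx : x ∈ s
  · simpa [indicator_of_mem hx] using h1 x
  · simpa [indicator_of_notMem hx] using h0 x hx

end Aux2


/-- make a `C₀` map from a compactly supported continuous map -/
noncomputable def mkC0 {X : Type*} [TopologicalSpace X] (g : C(X, ℝ))
    (hg : HasCompactSupport g) : ZeroAtInftyContinuousMap X ℝ :=
  ⟨g, hg.is_zero_at_infty⟩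

@[simp] lemma mkC0_apply {X : Type*} [TopologicalSpace X] (g : C(X, ℝ))
    (hg : HasCompactSupport g) (x : X) : mkC0 g hg x = g x := rfl

lemma lemA {X : Type*} [MetricSpace X] [LocallyCompactSpace X]
    [MeasurableSpace X] [BorelSpace X]
    (μ : ℕ → MeasureTheory.SignedMeasure X) (μlim : MeasureTheory.SignedMeasure X)
    (ν : ℕ → Measure X) (νlim : Measure X)
    [∀ n, IsFiniteMeasure (ν n)] [IsFiniteMeasure νlim]
    (hμν : ∀ n, (μ n).totalVariation ≤ ν n)
    (hμconv : ∀ g : ZeroAtInftyContinuousMap X ℝ, Tendsto (fun n => signedIntegral (μ n) g) atTop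
      (𝓝 (signedIntegral μlim g)))
    (hνconv : ∀ g : ZeroAtInftyContinuousMap X ℝ, Tendsto (fun n => ∫ x, g x ∂ ν n) atTop
      (𝓝 (∫ x, g x ∂ νlim)))
    {K U : Set X} (hK : IsCompact K) (hU : IsOpen U) (hKU : K ⊆ U) :
    μlim.totalVariation K ≤ νlim U := by
  haveI := aux_tv_finite μlim
  set p := μlim.toJordanDecomposition.posPart with hp
  set q := μlim.toJordanDecomposition.negPart with hq
  rw [← ENNReal.toReal_le_toReal (measure_ne_top _ _) (measure_ne_top _ _)]
  refine le_of_forall_pos_le_add fun ε hε => ?_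
  set δ := ε / 4 with hδdef
  have hδ : 0 < δ := by positivity
  have hδ' : (0:ℝ≥0∞) < ENNReal.ofReal δ := ENNReal.ofReal_pos.mpr hδ
  -- Hahn/Jordan singular sets
  obtain ⟨N, hNmeas, hpN, hqNc⟩ := μlim.toJordanDecomposition.mutuallySingular
  -- inner closed approximations
  have hA₁meas : MeasurableSet (K ∩ Nᶜ) := hK.measurableSet.inter hNmeas.compl
  have hA₂meas : MeasurableSet (K ∩ N) := hK.measurableSet.inter hNmeas
  obtain ⟨C₁, hC₁sub, hC₁closed, hC₁⟩ :=
    hA₁meas.exists_isClosed_lt_add (μ := p) (measure_ne_top _ _) hδ'.ne'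
  obtain ⟨C₂, hC₂sub, hC₂closed, hC₂⟩ :=
    hA₂meas.exists_isClosed_lt_add (μ := q) (measure_ne_top _ _) hδ'.ne'
  have hC₁cpt : IsCompact C₁ :=
    hK.of_isClosed_subset hC₁closed (hC₁sub.trans inter_subset_left)
  have hC₂cpt : IsCompact C₂ :=
    hK.of_isClosed_subset hC₂closed (hC₂sub.trans inter_subset_left)
  have hqC₁ : q C₁ = 0 := measure_mono_null (hC₁sub.trans inter_subset_right) hqNc
  have hpC₂ : p C₂ = 0 := by
    refine measure_mono_null (hC₂sub.trans inter_subset_right) hpN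
  have hdisj : Disjoint C₁ C₂ :=
    (disjoint_compl_left (a := N)).mono (hC₁sub.trans inter_subset_right)
      (hC₂sub.trans inter_subset_right)
  -- outer open approximations
  obtain ⟨O₁, hO₁sup, hO₁open, hO₁⟩ := C₁.exists_isOpen_lt_of_lt (ENNReal.ofReal δ)
    (by rw [hqC₁]; exact hδ') (μ := q)
  obtain ⟨O₂, hO₂sup, hO₂open, hO₂⟩ := C₂.exists_isOpen_lt_of_lt (ENNReal.ofReal δ)
    (by rw [hpC₂]; exact hδ') (μ := p)
  obtain ⟨D₁, D₂, hD₁o, hD₂o, hC₁D₁, hC₂D₂, hDdisj⟩ :=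
    SeparatedNhds.of_isCompact_isCompact hC₁cpt hC₂cpt hdisj
  set V₁ := U ∩ O₁ ∩ D₁ with hV₁def
  set V₂ := U ∩ O₂ ∩ D₂ with hV₂def
  have hV₁open : IsOpen V₁ := (hU.inter hO₁open).inter hD₁o
  have hV₂open : IsOpen V₂ := (hU.inter hO₂open).inter hD₂o
  have hC₁V₁ : C₁ ⊆ V₁ := subset_inter (subset_inter
    ((hC₁sub.trans inter_subset_left).trans hKU) hO₁sup) hC₁D₁
  have hC₂V₂ : C₂ ⊆ V₂ := subset_inter (subset_inter
    ((hC₂sub.trans inter_subset_left).trans hKU) hO₂sup) hC₂D₂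
  obtain ⟨k₁, hk₁cpt, hk₁int, hk₁sub⟩ := exists_compact_between hC₁cpt hV₁open hC₁V₁
  obtain ⟨k₂, hk₂cpt, hk₂int, hk₂sub⟩ := exists_compact_between hC₂cpt hV₂open hC₂V₂
  obtain ⟨g₁, hg₁one, hg₁zero, hg₁supp, hg₁icc⟩ :=
    exists_continuous_one_zero_of_isCompact hC₁cpt isOpen_interior.isClosed_compl
      (disjoint_compl_right_iff_subset.mpr hk₁int)
  obtain ⟨g₂, hg₂one, hg₂zero, hg₂supp, hg₂icc⟩ :=
    exists_continuous_one_zero_of_isCompact hC₂cpt isOpen_interior.isClosed_compl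
      (disjoint_compl_right_iff_subset.mpr hk₂int)
  obtain ⟨g₃, hg₃one, hg₃zero, hg₃supp, hg₃icc⟩ :=
    exists_continuous_one_zero_of_isCompact (hk₁cpt.union hk₂cpt) hU.isClosed_compl
      (disjoint_compl_right_iff_subset.mpr (union_subset (hk₁sub.trans (inter_subset_left.trans inter_subset_left)) (hk₂sub.trans (inter_subset_left.trans inter_subset_left))))
  -- zero values
  have hg₁z : ∀ x ∉ k₁, g₁ x = 0 := fun x hx =>
    hg₁zero (by simp only [mem_compl_iff]; exact fun h => hx (interior_subset h))
  have hg₂z : ∀ x ∉ k₂, g₂ x = 0 := fun x hx =>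
    hg₂zero (by simp only [mem_compl_iff]; exact fun h => hx (interior_subset h))
  have hg₃z : ∀ x ∉ U, g₃ x = 0 := fun x hx => hg₃zero hx
  -- the C₀ functions
  set Gfun : X → ℝ := fun x => g₁ x - g₂ x with hGfun
  have hGcont : Continuous Gfun := g₁.continuous.sub g₂.continuous
  have hGsupp : HasCompactSupport Gfun := by
    refine HasCompactSupport.of_support_subset_isCompact (hk₁cpt.union hk₂cpt) fun x hx => ?_
    by_contra hxk
    simp only [mem_union, not_or] at hxk
    exact hx (by simp [hGfun, hg₁z x hxk.1, hg₂z x hxk.2, Function.mem_support])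
  set G : ZeroAtInftyContinuousMap X ℝ := mkC0 ⟨Gfun, hGcont⟩ hGsupp with hGdef
  set G₃ : ZeroAtInftyContinuousMap X ℝ := mkC0 g₃ hg₃supp with hG₃def
  have hGbd : ∀ x, |Gfun x| ≤ 1 := fun x => by
    have h1 := hg₁icc x; have h2 := hg₂icc x
    simp only [mem_Icc] at h1 h2
    rw [abs_le]; constructor <;> simp only [hGfun] <;> linarith
  -- integrabilities
  have hg₁ip : Integrable (⇑g₁) p := aux_integrable_of_bdd g₁.continuous.aestronglyMeasurable
    (C := 1) (fun x => by have := hg₁icc x; simp only [mem_Icc] at this; rw [abs_le]; constructor <;> linarith)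
  have hg₂ip : Integrable (⇑g₂) p := aux_integrable_of_bdd g₂.continuous.aestronglyMeasurable
    (C := 1) (fun x => by have := hg₂icc x; simp only [mem_Icc] at this; rw [abs_le]; constructor <;> linarith)
  have hg₁iq : Integrable (⇑g₁) q := aux_integrable_of_bdd g₁.continuous.aestronglyMeasurable
    (C := 1) (fun x => by have := hg₁icc x; simp only [mem_Icc] at this; rw [abs_le]; constructor <;> linarith)
  have hg₂iq : Integrable (⇑g₂) q := aux_integrable_of_bdd g₂.continuous.aestronglyMeasurable
    (C := 1) (fun x => by have := hg₂icc x; simp only [mem_Icc] at this; rw [abs_le]; constructor <;> linarith)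
  -- estimates for p and q integrals
  have e₁ : (p C₁).toReal ≤ ∫ x, g₁ x ∂p :=
    aux_meas_le_integral hC₁closed.measurableSet hg₁ip
      (fun x hx => (hg₁one hx).symm.le) (fun x => (hg₁icc x).1)
  have e₄ : (q C₂).toReal ≤ ∫ x, g₂ x ∂q :=
    aux_meas_le_integral hC₂closed.measurableSet hg₂iq
      (fun x hx => (hg₂one hx).symm.le) (fun x => (hg₂icc x).1)
  have e₂ : ∫ x, g₂ x ∂p ≤ δ := by
    have h := aux_integral_le_meas hV₂open.measurableSet hg₂ip (fun x => (hg₂icc x).2)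
      (fun x hx => (hg₂z x (fun h => hx (hk₂sub h))).le)
    refine h.trans (ENNReal.toReal_le_of_le_ofReal hδ.le ?_)
    exact ((measure_mono (hV₂def ▸ (inter_subset_left.trans inter_subset_right))).trans_lt hO₂).le
  have e₃ : ∫ x, g₁ x ∂q ≤ δ := by
    have h := aux_integral_le_meas hV₁open.measurableSet hg₁iq (fun x => (hg₁icc x).2)
      (fun x hx => (hg₁z x (fun h => hx (hk₁sub h))).le)
    refine h.trans (ENNReal.toReal_le_of_le_ofReal hδ.le ?_)
    exact ((measure_mono (hV₁def ▸ (inter_subset_left.trans inter_subset_right))).trans_lt hO₁).le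
  -- measure bounds on K
  have hpK : (p K).toReal ≤ (p C₁).toReal + δ := by
    have h1 : p K ≤ p C₁ + ENNReal.ofReal δ := by
      calc p K ≤ p ((K ∩ Nᶜ) ∪ N) := measure_mono (fun x hx => by
              by_cases h : x ∈ N
              · exact Or.inr h
              · exact Or.inl ⟨hx, h⟩)
        _ ≤ p (K ∩ Nᶜ) + p N := measure_union_le _ _
        _ = p (K ∩ Nᶜ) := by rw [hpN, add_zero]
        _ ≤ p C₁ + ENNReal.ofReal δ := hC₁.le
    calc (p K).toReal ≤ (p C₁ + ENNReal.ofReal δ).toReal := ENNReal.toReal_mono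
          (by finiteness) h1
      _ = (p C₁).toReal + δ := by
          rw [ENNReal.toReal_add (measure_ne_top _ _) ENNReal.ofReal_ne_top,
            ENNReal.toReal_ofReal hδ.le]
  have hqK : (q K).toReal ≤ (q C₂).toReal + δ := by
    have h1 : q K ≤ q C₂ + ENNReal.ofReal δ := by
      calc q K ≤ q ((K ∩ N) ∪ Nᶜ) := measure_mono (fun x hx => by
              by_cases h : x ∈ N
              · exact Or.inl ⟨hx, h⟩
              · exact Or.inr h)
        _ ≤ q (K ∩ N) + q Nᶜ := measure_union_le _ _
        _ = q (K ∩ N) := by rw [hqNc, add_zero]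
        _ ≤ q C₂ + ENNReal.ofReal δ := hC₂.le
    calc (q K).toReal ≤ (q C₂ + ENNReal.ofReal δ).toReal := ENNReal.toReal_mono
          (by finiteness) h1
      _ = (q C₂).toReal + δ := by
          rw [ENNReal.toReal_add (measure_ne_top _ _) ENNReal.ofReal_ne_top,
            ENNReal.toReal_ofReal hδ.le]
  -- lower bound for the pairing with G
  have hGeq : signedIntegral μlim G =
      ((∫ x, g₁ x ∂p) - ∫ x, g₂ x ∂p) - ((∫ x, g₁ x ∂q) - ∫ x, g₂ x ∂q) := by
    simp only [signedIntegral, ← hp, ← hq]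
    have hc : (⇑G : X → ℝ) = fun x => g₁ x - g₂ x := rfl
    rw [hc, integral_sub hg₁ip hg₂ip, integral_sub hg₁iq hg₂iq]
  have hlow : (p K).toReal + (q K).toReal - 4 * δ ≤ signedIntegral μlim G := by
    rw [hGeq]; linarith
  -- upper bound for the pairing, via the ν's
  have hGint : ∀ (m : Measure X) [IsFiniteMeasure m], Integrable (⇑G) m := fun m _ =>
    aux_integrable_of_bdd (m := m) hGcont.aestronglyMeasurable (C := 1) hGbd
  have habs : ∀ x, |Gfun x| ≤ g₃ x := fun x => by
    by_cases hx : x ∈ k₁ ∪ k₂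
    · rw [hg₃one hx]; exact hGbd x
    · simp only [mem_union, not_or] at hx
      simp [hGfun, hg₁z x hx.1, hg₂z x hx.2, (hg₃icc x).1]
  have hub : ∀ n, signedIntegral (μ n) G ≤ ∫ x, g₃ x ∂(ν n) := by
    intro n
    refine (le_abs_self _).trans ((signedIntegral_abs_le (μ n) (ν n) (hμν n)
      (hGint (ν n))).trans ?_)
    refine integral_mono (hGint (ν n)).abs (aux_integrable_of_bdd
      g₃.continuous.aestronglyMeasurable (C := 1) (fun x => by
        have := hg₃icc x; simp only [mem_Icc] at this; rw [abs_le]; constructor <;> linarith))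
      (fun x => habs x)
  have hlim : signedIntegral μlim G ≤ ∫ x, g₃ x ∂νlim :=
    le_of_tendsto_of_tendsto' (hμconv G) (hνconv G₃) hub
  have hg₃νlim : ∫ x, g₃ x ∂νlim ≤ (νlim U).toReal :=
    aux_integral_le_meas hU.measurableSet (aux_integrable_of_bdd
      g₃.continuous.aestronglyMeasurable (C := 1) (fun x => by
        have := hg₃icc x; simp only [mem_Icc] at this; rw [abs_le]; constructor <;> linarith))
      (fun x => (hg₃icc x).2) (fun x hx => (hg₃z x hx).le)
  -- put everything together
  have hTV : (μlim.totalVariation K).toReal = (p K).toReal + (q K).toReal := by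
    have : μlim.totalVariation K = p K + q K := by
      rw [MeasureTheory.SignedMeasure.totalVariation, Measure.add_apply]
    rw [this, ENNReal.toReal_add (measure_ne_top _ _) (measure_ne_top _ _)]
  rw [hTV]
  have : 4 * δ = ε := by rw [hδdef]; ring
  linarith [e₁, e₂, e₃, e₄, hpK, hqK, hlow, hlim, hg₃νlim]


lemma zai_integrable {X : Type*} [MeasurableSpace X] [TopologicalSpace X]
    [OpensMeasurableSpace X] (g : ZeroAtInftyContinuousMap X ℝ) (m : Measure X)
    [IsFiniteMeasure m] : Integrable (⇑g) m := by
  refine aux_integrable_of_bdd (map_continuous g).aestronglyMeasurable (C := ‖g‖) fun x => ?_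
  have := g.toBCF.norm_coe_le_norm x
  rwa [ZeroAtInftyContinuousMap.norm_toBCF_eq_norm, Real.norm_eq_abs] at this

lemma lemB {X : Type*} [MetricSpace X] [LocallyCompactSpace X]
    [MeasurableSpace X] [BorelSpace X]
    (ν : ℕ → Measure X) (νlim : Measure X)
    [∀ n, IsFiniteMeasure (ν n)] [IsFiniteMeasure νlim]
    (hνconv : ∀ g : ZeroAtInftyContinuousMap X ℝ, Tendsto (fun n => ∫ x, g x ∂ ν n) atTop
      (𝓝 (∫ x, g x ∂ νlim))) :
    ∃ B : ℝ, 0 ≤ B ∧ ∀ (n : ℕ) (K : Set X), IsCompact K → ν n K ≤ ENNReal.ofReal B := by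
  set L : ℕ → (ZeroAtInftyContinuousMap X ℝ) →L[ℝ] ℝ := fun n =>
    LinearMap.mkContinuous
      { toFun := fun g => ∫ x, g x ∂ν n
        map_add' := fun g h => by
          simp only [ZeroAtInftyContinuousMap.coe_add, Pi.add_apply]
          exact integral_add (zai_integrable g (ν n)) (zai_integrable h (ν n))
        map_smul' := fun c g => by
          simp only [ZeroAtInftyContinuousMap.coe_smul, Pi.smul_apply, smul_eq_mul,
            RingHom.id_apply]
          rw [integral_const_mul] }
      ((ν n univ).toReal)
      (fun g => by
        have h1 : ‖∫ x, g x ∂ν n‖ ≤ ∫ x, ‖g x‖ ∂ν n :=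
          norm_integral_le_integral_norm (fun x => g x)
        have h : ∫ x, ‖g x‖ ∂ν n ≤ ∫ _, ‖g‖ ∂ν n := by
          refine integral_mono (zai_integrable g (ν n)).norm (integrable_const _) fun x => ?_
          have := g.toBCF.norm_coe_le_norm x
          rwa [ZeroAtInftyContinuousMap.norm_toBCF_eq_norm] at this
        rw [integral_const, smul_eq_mul] at h
        exact h1.trans h)
    with hLdef
  have hLapp : ∀ (n : ℕ) (g : ZeroAtInftyContinuousMap X ℝ), L n g = ∫ x, g x ∂ν n :=
    fun n g => rfl
  have hpt : ∀ g : ZeroAtInftyContinuousMap X ℝ, ∃ C, ∀ n, ‖L n g‖ ≤ C := by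
    intro g
    obtain ⟨b, hb⟩ := ((hνconv g).norm).bddAbove_range
    exact ⟨b, fun n => by rw [hLapp]; exact hb ⟨n, rfl⟩⟩
  obtain ⟨B₀, hB₀⟩ := banach_steinhaus hpt
  refine ⟨max B₀ 0, le_max_right _ _, fun n K hK => ?_⟩
  obtain ⟨gK, hgKone, -, hgKsupp, hgKicc⟩ :=
    exists_continuous_one_zero_of_isCompact hK isClosed_empty (disjoint_empty K)
  set GK := mkC0 gK hgKsupp with hGK
  have hGKnorm : ‖GK‖ ≤ 1 := by
    rw [← ZeroAtInftyContinuousMap.norm_toBCF_eq_norm]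
    refine (BoundedContinuousFunction.norm_le zero_le_one).2 fun x => ?_
    have h := hgKicc x
    simp only [mem_Icc] at h
    have hcoe : GK.toBCF x = gK x := rfl
    rw [Real.norm_eq_abs, hcoe, abs_le]
    constructor <;> linarith
  have h1 : (ν n K).toReal ≤ ∫ x, gK x ∂ν n := by
    rw [← measureReal_def, ← integral_indicator_one hK.measurableSet]
    refine integral_mono ((integrable_const (1:ℝ)).indicator hK.measurableSet)
      (aux_integrable_of_bdd gK.continuous.aestronglyMeasurable (C := 1) fun x => by
        have := hgKicc x; simp only [mem_Icc] at this; rw [abs_le]; constructor <;> linarith)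
      fun x => ?_
    by_cases hx : x ∈ K
    · have h1 : gK x = 1 := hgKone hx
      simp [indicator_of_mem hx, h1]
    · simpa [indicator_of_notMem hx] using (hgKicc x).1
  have h2 : ∫ x, gK x ∂ν n ≤ B₀ := by
    calc ∫ x, gK x ∂ν n = L n GK := (hLapp n GK).symm
      _ ≤ ‖L n GK‖ := le_abs_self _
      _ ≤ ‖L n‖ * ‖GK‖ := (L n).le_opNorm GK
      _ ≤ B₀ * 1 := by
          refine mul_le_mul (hB₀ n) hGKnorm (norm_nonneg _) ?_
          exact (norm_nonneg (L n)).trans (hB₀ n)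
      _ = B₀ := mul_one _
  rw [ENNReal.le_ofReal_iff_toReal_le (measure_ne_top _ _) (le_max_right _ _)]
  exact h1.trans (h2.trans (le_max_left _ _))



/-- stability of the pairing of weak-* convergent bounded measures with a
bounded Borel function vanishing at infinity and continuous off a closed `ν`-null set. -/
theorem stmt_1 {X : Type*} [MetricSpace X] [LocallyCompactSpace X]
    [MeasurableSpace X] [BorelSpace X]
    (μ : ℕ → MeasureTheory.SignedMeasure X) (μlim : MeasureTheory.SignedMeasure X)
    (ν : ℕ → Measure X) (νlim : Measure X)
    [∀ n, IsFiniteMeasure (ν n)] [IsFiniteMeasure νlim]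
    (hμν : ∀ n, (μ n).totalVariation ≤ ν n)
    (hμconv : ∀ g : ZeroAtInftyContinuousMap X ℝ, Tendsto (fun n => signedIntegral (μ n) g) atTop
      (𝓝 (signedIntegral μlim g)))
    (hνconv : ∀ g : ZeroAtInftyContinuousMap X ℝ, Tendsto (fun n => ∫ x, g x ∂ ν n) atTop
      (𝓝 (∫ x, g x ∂ νlim)))
    (F : Set X) (hF : IsClosed F) (hνF : νlim F = 0)
    (f : X → ℝ) (hfmeas : Measurable f) (hfbdd : ∃ C, ∀ x, |f x| ≤ C)
    (hfinfty : ∀ η > 0, ∃ K : Set X, IsCompact K ∧ ∀ x ∉ K, |f x| ≤ η)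
    (hfcont : ContinuousOn f Fᶜ) :
    Tendsto (fun n => signedIntegral (μ n) f) atTop (𝓝 (signedIntegral μlim f)) := by
  haveI := aux_tv_finite μlim
  obtain ⟨C₀v, hC₀v⟩ := hfbdd
  set C := max C₀v 0 with hCdef
  have hC : ∀ x, |f x| ≤ C := fun x => (hC₀v x).trans (le_max_left _ _)
  have hC0 : (0:ℝ) ≤ C := le_max_right _ _
  obtain ⟨B, hB0, hB⟩ := lemB ν νlim hνconv
  -- the σ-compact carrier of f
  have hKfex : ∀ k : ℕ, ∃ K : Set X, IsCompact K ∧ ∀ x ∉ K, |f x| ≤ 1/(k+1) := fun k =>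
    hfinfty _ (by positivity)
  choose Kf hKfc hKfb using hKfex
  set Sf := ⋃ k, Kf k with hSfdef
  have hSfmeas : MeasurableSet Sf :=
    MeasurableSet.iUnion fun k => (hKfc k).measurableSet
  have hfSf : ∀ x ∉ Sf, f x = 0 := by
    intro x hx
    have hxk : ∀ k : ℕ, x ∉ Kf k := fun k hk => hx (mem_iUnion.mpr ⟨k, hk⟩)
    have h1 : ∀ k : ℕ, |f x| ≤ 1/((k:ℝ)+1) := fun k => hKfb k x (hxk k)
    have h2 : |f x| ≤ 0 :=
      ge_of_tendsto' tendsto_one_div_add_atTop_nhds_zero_nat fun k => h1 k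
    exact abs_eq_zero.mp (le_antisymm h2 (abs_nonneg _))
  set Tot := (μlim.totalVariation univ).toReal with hTotdef
  have hTot0 : 0 ≤ Tot := ENNReal.toReal_nonneg
  rw [Metric.tendsto_atTop]
  intro ε hε
  set η := ε / (2 * (B + Tot + 8*C + 1)) with hηdef
  have hden : (0:ℝ) < B + Tot + 8*C + 1 := by positivity
  have hη : 0 < η := by positivity
  obtain ⟨K, hKcpt, hKb⟩ := hfinfty η hη
  obtain ⟨L, hLcpt, hKL, -⟩ := exists_compact_between hKcpt isOpen_univ (subset_univ K)
  have hKsubL : K ⊆ L := hKL.trans interior_subset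
  have hFL : IsCompact (F ∩ L) := hLcpt.inter_left hF
  -- the total variation of the limit vanishes on F ∩ L
  have hTVFL : μlim.totalVariation (F ∩ L) = 0 := by
    have hν0 : νlim (F ∩ L) = 0 := measure_mono_null inter_subset_left hνF
    refine le_antisymm ?_ (by simp)
    rw [← hν0, Set.measure_eq_iInf_isOpen (F ∩ L) νlim]
    exact le_iInf fun U => le_iInf fun hsub => le_iInf fun hopen =>
      lemA μ μlim ν νlim hμν hμconv hνconv hFL hopen hsub
  -- small open neighborhoods
  obtain ⟨W₀, hW₀sup, hW₀open, hW₀⟩ := F.exists_isOpen_lt_of_lt (ENNReal.ofReal η)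
    (by rw [hνF]; exact ENNReal.ofReal_pos.mpr hη) (μ := νlim)
  obtain ⟨W₁, hW₁sup, hW₁open, hW₁⟩ := (F ∩ L).exists_isOpen_lt_of_lt (ENNReal.ofReal η)
    (by rw [hTVFL]; exact ENNReal.ofReal_pos.mpr hη) (μ := μlim.totalVariation)
  set W := W₀ ∩ W₁ with hWdef
  have hWopen : IsOpen W := hW₀open.inter hW₁open
  have hFLW : F ∩ L ⊆ W := subset_inter (inter_subset_left.trans hW₀sup) hW₁sup
  -- the cutoff localizing near F ∩ L
  obtain ⟨hw, hwone, hwzero, hwsupp, hwicc⟩ :=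
    exists_continuous_one_zero_of_isCompact hFL hWopen.isClosed_compl
      (disjoint_compl_right_iff_subset.mpr hFLW)
  set V := hw ⁻¹' (Ioi (1/2 : ℝ)) with hVdef
  have hVopen : IsOpen V := isOpen_Ioi.preimage hw.continuous
  have hFLV : F ∩ L ⊆ V := fun x hx => by
    have : hw x = 1 := hwone hx
    simp only [hVdef, mem_preimage, mem_Ioi, this]; norm_num
  have hVW : V ⊆ W := fun x hx => by
    by_contra hxW
    have : hw x = 0 := hwzero hxW
    simp only [hVdef, mem_preimage, mem_Ioi, this] at hx; linarith
  have hindV : ∀ x, V.indicator (1 : X → ℝ) x ≤ 2 * hw x := by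
    intro x
    by_cases hx : x ∈ V
    · have : (1:ℝ)/2 < hw x := hx
      simp only [indicator_of_mem hx, Pi.one_apply]; linarith
    · have := (hwicc x).1
      simp only [indicator_of_notMem hx]; linarith
  -- Tietze extension of f from L \ V
  set A := L \ V with hAdef
  have hAclosed : IsClosed A := hLcpt.isClosed.sdiff hVopen
  have hAF : A ⊆ Fᶜ := fun x hx hxF => hx.2 (hFLV ⟨hxF, hx.1⟩)
  have hcontA : Continuous (A.restrict f) := ContinuousOn.restrict (hfcont.mono hAF)
  set fA : BoundedContinuousFunction A ℝ :=
    BoundedContinuousFunction.ofNormedAddCommGroup (A.restrict f) hcontA C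
      (fun x => by rw [Real.norm_eq_abs]; exact hC x) with hfAdef
  obtain ⟨g₀, hg₀norm, hg₀res⟩ :=
    BoundedContinuousFunction.exists_norm_eq_restrict_eq_of_closed fA hAclosed
  have hfAnorm : ‖fA‖ ≤ C :=
    BoundedContinuousFunction.norm_ofNormedAddCommGroup_le _ hC0 _
  have hg₀bd : ∀ x, |g₀ x| ≤ C := fun x => by
    have h1 := g₀.norm_coe_le_norm x
    rw [hg₀norm, Real.norm_eq_abs] at h1
    exact h1.trans hfAnorm
  have hg₀A : ∀ x, x ∈ A → g₀ x = f x := by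
    intro x hx
    have h1 := DFunLike.congr_fun hg₀res (⟨x, hx⟩ : A)
    simp [hfAdef, BoundedContinuousFunction.coe_ofNormedAddCommGroup] at h1; exact h1
  -- the cutoff equal to 1 on K with support in L
  obtain ⟨χ, hχone, hχzero, hχsupp, hχicc⟩ :=
    exists_continuous_one_zero_of_isCompact hKcpt isOpen_interior.isClosed_compl
      (disjoint_compl_right_iff_subset.mpr hKL)
  set gfun : X → ℝ := fun x => χ x * g₀ x with hgfundef
  have hgcont : Continuous gfun := χ.continuous.mul g₀.continuous
  have hgsupp : HasCompactSupport gfun := hχsupp.mul_right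
  set G := mkC0 ⟨gfun, hgcont⟩ hgsupp with hGdef
  have hGg : (⇑G : X → ℝ) = gfun := rfl
  have hgbd : ∀ x, |gfun x| ≤ C := by
    intro x
    have h1 := hχicc x
    simp only [mem_Icc] at h1
    calc |gfun x| = |χ x| * |g₀ x| := abs_mul _ _
      _ ≤ 1 * C := by
          refine mul_le_mul ?_ (hg₀bd x) (abs_nonneg _) zero_le_one
          rw [abs_le]; constructor <;> linarith
      _ = C := one_mul _
  have hgL : ∀ x, x ∉ L → gfun x = 0 := fun x hx => by
    have : χ x = 0 := hχzero (fun h => hx (interior_subset h))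
    simp [hgfundef, this]
  -- the pointwise estimate
  set LS := L ∪ Sf with hLSdef
  have hLSmeas : MeasurableSet LS := hLcpt.measurableSet.union hSfmeas
  have hVmeas : MeasurableSet V := hVopen.measurableSet
  set φb : X → ℝ := fun x => η * LS.indicator 1 x + (2*C) * V.indicator 1 x with hφbdef
  have hpt : ∀ x, |f x - gfun x| ≤ φb x := by
    intro x
    have hLS0 : (0:ℝ) ≤ η * LS.indicator 1 x := by
      refine mul_nonneg hη.le ?_
      by_cases hx : x ∈ LS <;> simp [indicator_of_mem, indicator_of_notMem, hx]
    have hV0 : (0:ℝ) ≤ (2*C) * V.indicator 1 x := by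
      refine mul_nonneg (by linarith) ?_
      by_cases hx : x ∈ V <;> simp [indicator_of_mem, indicator_of_notMem, hx]
    by_cases hxV : x ∈ V
    · have h1 : |f x - gfun x| ≤ 2*C := by
        calc |f x - gfun x| ≤ |f x| + |gfun x| := abs_sub _ _
          _ ≤ C + C := add_le_add (hC x) (hgbd x)
          _ = 2*C := by ring
      have h2 : (2*C) * V.indicator 1 x = 2*C := by simp [indicator_of_mem hxV]
      simp only [hφbdef]; rw [h2]; linarith
    · by_cases hxL : x ∈ L
      · have hxA : x ∈ A := ⟨hxL, hxV⟩
        have hgf : g₀ x = f x := hg₀A x hxA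
        have hLS : LS.indicator (1 : X → ℝ) x = 1 :=
          indicator_of_mem (Or.inl hxL) 1
        by_cases hxK : x ∈ K
        · have : χ x = 1 := hχone hxK
          have : f x - gfun x = 0 := by simp [hgfundef, this, hgf]
          rw [this, abs_zero]
          simp only [hφbdef]; linarith
        · have hfx : |f x| ≤ η := hKb x hxK
          have hchi := hχicc x
          simp only [mem_Icc] at hchi
          have : f x - gfun x = (1 - χ x) * f x := by rw [hgfundef]; simp [hgf]; ring
          rw [this, abs_mul]
          have h1 : |1 - χ x| ≤ 1 := by rw [abs_le]; constructor <;> linarith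
          have h2 : |1 - χ x| * |f x| ≤ 1 * η :=
            mul_le_mul h1 hfx (abs_nonneg _) zero_le_one
          simp only [hφbdef]; rw [hLS]; linarith
      · have hg0 : gfun x = 0 := hgL x hxL
        by_cases hxS : x ∈ Sf
        · have hLS : LS.indicator (1 : X → ℝ) x = 1 := indicator_of_mem (Or.inr hxS) 1
          have hfx : |f x| ≤ η := hKb x (fun h => hxL (hKsubL h))
          simp only [hφbdef]; rw [hLS, hg0]
          simpa using by linarith [hfx, hV0] 
        · have : f x = 0 := hfSf x hxS
          rw [this, hg0, sub_zero, abs_zero]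
          simp only [hφbdef]; linarith
  -- integrability
  have hfint : ∀ (m : Measure X) [IsFiniteMeasure m], Integrable f m := fun m _ =>
    aux_integrable_of_bdd hfmeas.aestronglyMeasurable hC
  have hgint : ∀ (m : Measure X) [IsFiniteMeasure m], Integrable gfun m := fun m _ =>
    aux_integrable_of_bdd hgcont.aestronglyMeasurable hgbd
  have hiLS : ∀ (m : Measure X) [IsFiniteMeasure m],
      Integrable (fun x => LS.indicator (1 : X → ℝ) x) m := by
    intro m _
    exact (integrable_const (1:ℝ)).indicator hLSmeas
  have hiV : ∀ (m : Measure X) [IsFiniteMeasure m],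
      Integrable (fun x => V.indicator (1 : X → ℝ) x) m := by
    intro m _
    exact (integrable_const (1:ℝ)).indicator hVmeas
  have hφint : ∀ (m : Measure X) [IsFiniteMeasure m], Integrable φb m := by
    intro m _
    exact ((hiLS m).const_mul η).add ((hiV m).const_mul (2*C))
  -- the main integral bound, for any finite measure
  have hdiffint : ∀ (m : Measure X) [IsFiniteMeasure m],
      (∫ x, |f x - gfun x| ∂m) ≤ η * (m LS).toReal + (2*C) * (m V).toReal := by
    intro m _
    have h1 : (∫ x, |f x - gfun x| ∂m) ≤ ∫ x, φb x ∂m :=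
      integral_mono ((hfint m).sub (hgint m)).abs (hφint m) hpt
    have h2 : (∫ x, φb x ∂m) = η * (m LS).toReal + (2*C) * (m V).toReal := by
      calc (∫ x, φb x ∂m)
          = (∫ x, η * LS.indicator (1 : X → ℝ) x ∂m)
              + ∫ x, (2*C) * V.indicator (1 : X → ℝ) x ∂m :=
            integral_add ((hiLS m).const_mul η) ((hiV m).const_mul (2*C))
        _ = η * (m LS).toReal + (2*C) * (m V).toReal := by
            rw [integral_const_mul, integral_const_mul, integral_indicator_one hLSmeas,
              integral_indicator_one hVmeas, measureReal_def, measureReal_def]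
    exact h1.trans h2.le
  -- mass bounds
  have hLSν : ∀ n, (ν n LS).toReal ≤ B := by
    intro n
    have hsub : LS ⊆ ⋃ k, (L ∪ accumulate Kf k) := by
      intro x hx
      rcases hx with hx | hx
      · exact mem_iUnion.mpr ⟨0, Or.inl hx⟩
      · obtain ⟨k, hk⟩ := mem_iUnion.mp hx
        exact mem_iUnion.mpr ⟨k, Or.inr (subset_accumulate hk)⟩
    have hmono : Monotone fun k => L ∪ accumulate Kf k := fun i j hij =>
      union_subset_union_right L (monotone_accumulate hij)
    have h1 : ν n LS ≤ ν n (⋃ k, (L ∪ accumulate Kf k)) := measure_mono hsub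
    rw [hmono.measure_iUnion] at h1
    have h2 : ν n LS ≤ ENNReal.ofReal B := by
      refine h1.trans (iSup_le fun k => hB n _ ?_)
      exact hLcpt.union (isCompact_accumulate hKfc k)
    exact ENNReal.toReal_le_of_le_ofReal hB0 h2
  have hTVLS : (μlim.totalVariation LS).toReal ≤ Tot :=
    ENNReal.toReal_mono (measure_ne_top _ _) (measure_mono (subset_univ _))
  have hTVV : (μlim.totalVariation V).toReal ≤ η := by
    refine ENNReal.toReal_le_of_le_ofReal hη.le ?_
    exact ((measure_mono (hVW.trans inter_subset_right)).trans hW₁.le)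
  -- hw integrals
  have hwint : ∀ (m : Measure X) [IsFiniteMeasure m], Integrable (⇑hw) m := fun m _ =>
    aux_integrable_of_bdd hw.continuous.aestronglyMeasurable (C := 1) fun x => by
      have := hwicc x; simp only [mem_Icc] at this; rw [abs_le]; constructor <;> linarith
  have hVν : ∀ n, (ν n V).toReal ≤ 2 * ∫ x, hw x ∂ν n := by
    intro n
    rw [← measureReal_def, ← integral_indicator_one hVmeas, ← integral_const_mul]
    exact integral_mono ((integrable_const (1:ℝ)).indicator hVmeas)
      ((hwint (ν n)).const_mul 2) hindV
  have hwlim : (∫ x, hw x ∂νlim) ≤ η := by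
    have h1 : (∫ x, hw x ∂νlim) ≤ (νlim W).toReal :=
      aux_integral_le_meas hWopen.measurableSet (hwint νlim)
        (fun x => (hwicc x).2) (fun x hx => (hwzero hx).le)
    refine h1.trans (ENNReal.toReal_le_of_le_ofReal hη.le ?_)
    exact (measure_mono inter_subset_left).trans hW₀.le
  have hev1 : ∀ᶠ n in atTop, (∫ x, hw x ∂ν n) ≤ (3/2) * η := by
    have := hνconv (mkC0 hw hwsupp)
    have hcoe : ∀ (m : Measure X), (∫ x, (mkC0 hw hwsupp) x ∂m) = ∫ x, hw x ∂m := fun m => rfl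
    rw [hcoe] at this
    simp only [hcoe] at this
    exact (this.eventually_le_const (by linarith)).mono fun n hn => hn
  have hev2 : ∀ᶠ n in atTop, |signedIntegral (μ n) G - signedIntegral μlim G| < η := by
    have h1 := Metric.tendsto_nhds.mp (hμconv G) η hη
    exact h1.mono fun n hn => by rwa [Real.dist_eq] at hn
  -- per-n estimates
  have key : ∀ᶠ n in atTop,
      dist (signedIntegral (μ n) f) (signedIntegral μlim f) < ε := by
    filter_upwards [hev1, hev2] with n h1 h2
    have d1 : |signedIntegral (μ n) f - signedIntegral (μ n) G| ≤ η * B + (2*C) * (3*η) := by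
      rw [hGg]
      refine (signedIntegral_diff_abs_le (μ n) (ν n) (hμν n) (hfint (ν n))
        (hgint (ν n))).trans ?_
      refine (hdiffint (ν n)).trans ?_
      have e1 : (ν n V).toReal ≤ 3*η := (hVν n).trans (by linarith)
      have e2 := hLSν n
      have := mul_le_mul_of_nonneg_left e1 (by linarith : (0:ℝ) ≤ 2*C)
      have := mul_le_mul_of_nonneg_left e2 hη.le
      linarith
    have d3 : |signedIntegral μlim f - signedIntegral μlim G| ≤ η * Tot + (2*C) * η := by
      rw [hGg]
      refine (signedIntegral_diff_abs_le μlim μlim.totalVariation le_rfl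
        (hfint μlim.totalVariation) (hgint μlim.totalVariation)).trans ?_
      refine (hdiffint μlim.totalVariation).trans ?_
      have := mul_le_mul_of_nonneg_left hTVV (by linarith : (0:ℝ) ≤ 2*C)
      have := mul_le_mul_of_nonneg_left hTVLS hη.le
      linarith
    have htri : |signedIntegral (μ n) f - signedIntegral μlim f| ≤
        |signedIntegral (μ n) f - signedIntegral (μ n) G|
          + |signedIntegral (μ n) G - signedIntegral μlim G|
          + |signedIntegral μlim G - signedIntegral μlim f| := by
      have := abs_sub_le (signedIntegral (μ n) f) (signedIntegral (μ n) G)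
        (signedIntegral μlim f)
      have h4 := abs_sub_le (signedIntegral (μ n) G) (signedIntegral μlim G)
        (signedIntegral μlim f)
      linarith
    have hηε : η * (B + Tot + 8*C + 1) = ε / 2 := by
      rw [hηdef]; field_simp
    rw [Real.dist_eq]
    have d3' : |signedIntegral μlim G - signedIntegral μlim f| ≤ η * Tot + (2*C) * η := by
      rw [abs_sub_comm]; exact d3
    calc |signedIntegral (μ n) f - signedIntegral μlim f| ≤
        (η * B + (2*C) * (3*η)) + η + (η * Tot + (2*C) * η) := by linarith
      _ = η * (B + Tot + 8*C + 1) := by ring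
      _ = ε / 2 := hηε
      _ < ε := by linarith
  obtain ⟨N, hN⟩ := eventually_atTop.mp key
  exact ⟨N, hN⟩
end

section
/- Let X and Y be separable Banach spaces with Y continuously and densely embedded in X. Let (f_n) be a sequence of functions from [0,T] to the dual X' that is bounded in L^∞((0,T); X'), such that each f_n is differentiable with (∂_t f_n) bounded in L^∞((0,T); Y'). Then (f_n) has a subsequence converging in C([0,T]; X' − w*), i.e. uniformly in t with respect to the weak-* topology on bounded sets of X'. -/
open Filter Topology Set

/-- a version of the Aubin–Lions lemma. If `Y` embeds continuously and
densely in `X` (both separable Banach), `(f_n)` is bounded in `L^∞((0,T); X')` and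
`(∂_t f_n)` is bounded in `L^∞((0,T); Y')`, then a subsequence of `(f_n)` converges
in `C([0,T]; X' - w*)`. -/
theorem stmt_2 {X Y : Type*}
    [NormedAddCommGroup X] [NormedSpace ℝ X] [CompleteSpace X]
    [TopologicalSpace.SeparableSpace X]
    [NormedAddCommGroup Y] [NormedSpace ℝ Y] [CompleteSpace Y]
    [TopologicalSpace.SeparableSpace Y]
    (j : Y →L[ℝ] X) (hjinj : Function.Injective j) (hjdense : DenseRange j)
    (T : ℝ) (hT : 0 < T)
    (f f' : ℕ → ℝ → (X →L[ℝ] ℝ))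
    (hderiv : ∀ n, ∀ t ∈ Icc (0 : ℝ) T, HasDerivAt (f n) (f' n t) t)
    (hbdd : ∃ C, ∀ n, ∀ t ∈ Icc (0 : ℝ) T, ‖f n t‖ ≤ C)
    (hbdd' : ∃ C, ∀ n, ∀ t ∈ Icc (0 : ℝ) T, ‖(f' n t).comp j‖ ≤ C) :
    ∃ φ : ℕ → ℕ, StrictMono φ ∧ ∃ g : ℝ → (X →L[ℝ] ℝ),
      ∀ x : X, TendstoUniformlyOn (fun k t => f (φ k) t x) (fun t => g t x)
        atTop (Icc (0 : ℝ) T) := by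
  obtain ⟨C, hC⟩ := hbdd
  obtain ⟨C', hC'⟩ := hbdd'
  have h0T : (0 : ℝ) ∈ Icc (0 : ℝ) T := ⟨le_refl _, hT.le⟩
  have hC0 : 0 ≤ C := le_trans (norm_nonneg _) (hC 0 0 h0T)
  have hC'0 : 0 ≤ C' := le_trans (norm_nonneg _) (hC' 0 0 h0T)
  -- Lipschitz estimate on `j(Y)`
  have hLip : ∀ n (y : Y), ∀ t ∈ Icc (0 : ℝ) T, ∀ s ∈ Icc (0 : ℝ) T,
      ‖f n t (j y) - f n s (j y)‖ ≤ C' * ‖y‖ * ‖t - s‖ := by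
    intro n y t ht s hs
    refine (convex_Icc (0 : ℝ) T).norm_image_sub_le_of_norm_hasDerivWithin_le
      (f := fun r => f n r (j y)) (f' := fun r => f' n r (j y)) ?_ ?_ hs ht
    · intro r hr
      have h1 : HasDerivAt (fun r => f n r (j y)) (f' n r (j y) + f n r 0) r :=
        (hderiv n r hr).clm_apply (hasDerivAt_const r (j y))
      simpa using h1.hasDerivWithinAt
    · intro r hr
      calc ‖f' n r (j y)‖ = ‖((f' n r).comp j) y‖ := rfl
        _ ≤ ‖(f' n r).comp j‖ * ‖y‖ := ContinuousLinearMap.le_opNorm _ _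
        _ ≤ C' * ‖y‖ := mul_le_mul_of_nonneg_right (hC' n r hr) (norm_nonneg _)
  -- dense sequences
  have : Nonempty Y := ⟨0⟩
  obtain ⟨d, hd⟩ := TopologicalSpace.exists_dense_seq Y
  have : Nonempty (Icc (0 : ℝ) T) := ⟨⟨0, h0T⟩⟩
  obtain ⟨u, hu⟩ := TopologicalSpace.exists_dense_seq (Icc (0 : ℝ) T)
  -- diagonal extraction via sequential compactness of a product of intervals
  set F : ℕ → (ℕ × ℕ → ℝ) := fun n p => f n (u p.2) (j (d p.1)) with hF
  have hmem : ∀ n, F n ∈ Set.univ.pi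
      (fun p : ℕ × ℕ => Icc (-(C * ‖j (d p.1)‖)) (C * ‖j (d p.1)‖)) := by
    intro n p _
    rw [mem_Icc, ← abs_le]
    calc |f n (u p.2) (j (d p.1))| = ‖f n (u p.2) (j (d p.1))‖ := rfl
      _ ≤ ‖f n (u p.2)‖ * ‖j (d p.1)‖ := ContinuousLinearMap.le_opNorm _ _
      _ ≤ C * ‖j (d p.1)‖ :=
        mul_le_mul_of_nonneg_right (hC n _ (u p.2).2) (norm_nonneg _)
  have hcpt : IsCompact (Set.univ.pi
      (fun p : ℕ × ℕ => Icc (-(C * ‖j (d p.1)‖)) (C * ‖j (d p.1)‖))) :=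
    isCompact_univ_pi fun _ => isCompact_Icc
  obtain ⟨G, -, φ, hφ, hconv⟩ := hcpt.isSeqCompact (fun n => hmem n)
  -- Cauchy at the countable grid
  have hcau : ∀ m i, CauchySeq (fun k => f (φ k) (u i) (j (d m))) := by
    intro m i
    have := tendsto_pi_nhds.mp hconv (m, i)
    exact this.cauchySeq
  -- uniform Cauchyness for every x
  have key : ∀ x : X, UniformCauchySeqOn (fun k t => f (φ k) t x) atTop (Icc (0 : ℝ) T) := by
    intro x
    rw [Metric.uniformCauchySeqOn_iff]
    intro ε hε
    -- approximate x
    have hdjd : DenseRange (fun m => j (d m)) := hjdense.comp hd j.continuous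
    obtain ⟨m, hm⟩ : ∃ m, ‖x - j (d m)‖ < ε / (5 * (C + 1)) := by
      obtain ⟨m, hm⟩ := Metric.denseRange_iff.mp hdjd x (ε / (5 * (C + 1))) (by positivity)
      exact ⟨m, by rwa [dist_eq_norm] at hm⟩
    set L : ℝ := C' * ‖d m‖ + 1 with hLdef
    have hL : 0 < L := by positivity
    set δ : ℝ := ε / (5 * L) with hδdef
    have hδ : 0 < δ := by positivity
    -- finite δ-net of times
    have hcover : Icc (0 : ℝ) T ⊆ ⋃ i : ℕ, Metric.ball (u i : ℝ) δ := by
      intro t ht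
      obtain ⟨i, hi⟩ := Metric.denseRange_iff.mp hu ⟨t, ht⟩ δ hδ
      refine mem_iUnion.mpr ⟨i, ?_⟩
      rw [Subtype.dist_eq] at hi
      rw [Metric.mem_ball]
      exact hi
    obtain ⟨I, hI⟩ := isCompact_Icc.elim_finite_subcover
      (fun i : ℕ => Metric.ball (u i : ℝ) δ) (fun _ => Metric.isOpen_ball) hcover
    -- quantitative Cauchyness at the net points
    have hN : ∀ i : ℕ, ∃ N : ℕ, ∀ k ≥ N, ∀ l ≥ N,
        dist (f (φ k) (u i) (j (d m))) (f (φ l) (u i) (j (d m))) < ε / 5 :=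
      fun i => Metric.cauchySeq_iff.mp (hcau m i) _ (by positivity)
    choose N hNs using hN
    refine ⟨I.sup N, fun k hk l hl t ht => ?_⟩
    obtain ⟨i, hiI, hti⟩ : ∃ i ∈ I, t ∈ Metric.ball (u i : ℝ) δ := by
      simpa using hI ht
    have hki : k ≥ N i := le_trans (Finset.le_sup hiI) hk
    have hli : l ≥ N i := le_trans (Finset.le_sup hiI) hl
    have hterm1 : ∀ n', ∀ s ∈ Icc (0:ℝ) T,
        dist (f n' s x) (f n' s (j (d m))) < ε / 5 := by
      intro n' s hs
      rw [dist_eq_norm, ← map_sub]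
      calc ‖f n' s (x - j (d m))‖ ≤ ‖f n' s‖ * ‖x - j (d m)‖ :=
            ContinuousLinearMap.le_opNorm _ _
        _ ≤ C * ‖x - j (d m)‖ := mul_le_mul_of_nonneg_right (hC n' s hs) (norm_nonneg _)
        _ ≤ C * (ε / (5 * (C + 1))) := by
            exact mul_le_mul_of_nonneg_left hm.le hC0
        _ < ε / 5 := by
            have hC1 : C + 1 ≠ 0 := by positivity
            have h1 : C * (ε / (5 * (C + 1))) = (C / (C + 1)) * (ε / 5) := by
              rw [mul_div_assoc', div_mul_div_comm, mul_comm (C + 1) 5]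
            rw [h1]
            have h2 : C / (C + 1) < 1 := by
              rw [div_lt_one (by linarith)]; linarith
            calc (C / (C + 1)) * (ε / 5) < 1 * (ε / 5) :=
                  mul_lt_mul_of_pos_right h2 (by positivity)
              _ = ε / 5 := one_mul _
    have hterm2 : ∀ n', dist (f n' t (j (d m))) (f n' (u i) (j (d m))) < ε / 5 := by
      intro n'
      rw [dist_eq_norm]
      calc ‖f n' t (j (d m)) - f n' (u i) (j (d m))‖
          ≤ C' * ‖d m‖ * ‖t - (u i : ℝ)‖ := hLip n' (d m) t ht (u i) (u i).2
        _ ≤ C' * ‖d m‖ * δ := by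
            apply mul_le_mul_of_nonneg_left _ (by positivity)
            rw [Real.norm_eq_abs, ← Real.dist_eq]
            exact (Metric.mem_ball.mp hti).le
        _ < L * δ := by
            apply mul_lt_mul_of_pos_right _ hδ
            rw [hLdef]; linarith
        _ = ε / 5 := by
            rw [hδdef]; field_simp
    have h1 := hterm1 (φ k) t ht
    have h2 := hterm2 (φ k)
    have h3 := hNs i k hki l hli
    have h4 : dist (f (φ l) (↑(u i)) (j (d m))) (f (φ l) t (j (d m))) < ε / 5 := by
      rw [dist_comm]; exact hterm2 (φ l)
    have h5 : dist (f (φ l) t (j (d m))) (f (φ l) t x) < ε / 5 := by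
      rw [dist_comm]; exact hterm1 (φ l) t ht
    have t1 := dist_triangle (f (φ k) t x) (f (φ k) t (j (d m))) (f (φ l) t x)
    have t2 := dist_triangle (f (φ k) t (j (d m))) (f (φ k) (↑(u i)) (j (d m))) (f (φ l) t x)
    have t3 := dist_triangle (f (φ k) (↑(u i)) (j (d m))) (f (φ l) (↑(u i)) (j (d m))) (f (φ l) t x)
    have t4 := dist_triangle (f (φ l) (↑(u i)) (j (d m))) (f (φ l) t (j (d m))) (f (φ l) t x)
    have t5 := dist_triangle (f (φ l) t (j (d m))) (f (φ l) t x) (f (φ l) t x)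
    linarith [dist_nonneg (x := f (φ l) t x) (y := f (φ l) t x),
      dist_self (f (φ l) t x)]
  -- pointwise Cauchyness, hence pointwise limits
  have hptc : ∀ t ∈ Icc (0 : ℝ) T, ∀ x : X, CauchySeq (fun k => f (φ k) t x) := by
    intro t ht x
    rw [Metric.cauchySeq_iff]
    intro ε hε
    obtain ⟨Nn, hNn⟩ := Metric.uniformCauchySeqOn_iff.mp (key x) ε hε
    exact ⟨Nn, fun a ha b hb => hNn a ha b hb t ht⟩
  have hG : ∀ t : ℝ, ∃ G : X →L[ℝ] ℝ, t ∈ Icc (0 : ℝ) T →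
      ∀ x, Tendsto (fun k => f (φ k) t x) atTop (𝓝 (G x)) := by
    intro t
    by_cases ht : t ∈ Icc (0 : ℝ) T
    · have hg0 : ∀ x, Tendsto (fun k => f (φ k) t x) atTop
          (𝓝 (limUnder atTop (fun k => f (φ k) t x))) :=
        fun x => (hptc t ht x).tendsto_limUnder
      have hbdd : Bornology.IsBounded (Set.range (fun k => f (φ k) t)) := by
        apply isBounded_iff_forall_norm_le.mpr ⟨C, ?_⟩
        rintro _ ⟨k, rfl⟩
        exact hC (φ k) t ht
      exact ⟨ContinuousLinearMap.ofTendstoOfBoundedRange _ _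
        (tendsto_pi_nhds.mpr hg0) hbdd, fun _ x => hg0 x⟩
    · exact ⟨0, fun h => absurd h ht⟩
  choose g hg using hG
  exact ⟨φ, hφ, g, fun x =>
    (key x).tendstoUniformlyOn_of_tendsto (fun t ht => hg t ht x)⟩
end

section
/- Let F₀ be the exterior of the closed unit disk in ℝ², let ω ∈ C_c^∞(F₀), and let u be a smooth, divergence-free, square-integrable vector field on F₀ with curl u = ω, tangent to the boundary circle (u · n = 0 on |x| = 1). Then for every divergence-free vector field Ψ ∈ C¹_c(closure of F₀; ℝ²): ∫_{F₀} u · ((u·∇)Ψ) dx = −½ ∫_{|x|=1} |u · n^⊥|² (Ψ · n) ds + ∫_{F₀} ω (u · Ψ^⊥) dx. -/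
set_option maxHeartbeats 1000000
open MeasureTheory Real Set


/-- helper: evaluate a continuous linear map on `(a,b)` via the standard basis. -/
theorem clm_expand (L : (ℝ × ℝ) →L[ℝ] ℝ) (a b : ℝ) :
    L (a, b) = a * L (1, 0) + b * L (0, 1) := by
  have h : (a, b) = a • ((1:ℝ), (0:ℝ)) + b • ((0:ℝ), (1:ℝ)) := by
    simp [Prod.ext_iff]
  rw [h, map_add, L.map_smul, L.map_smul, smul_eq_mul, smul_eq_mul]

/-- Divergence theorem for the exterior of the unit disk, for a compactly supported
`C¹` vector field `(V₁, V₂)` with divergence `g`. -/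
theorem ext_div (V₁ V₂ g : ℝ × ℝ → ℝ) (V₁' V₂' : ℝ × ℝ → (ℝ × ℝ) →L[ℝ] ℝ) (R : ℝ) (hR : 1 < R)
    (hV₁c : ContinuousOn V₁ {x : ℝ × ℝ | 1 ≤ x.1 ^ 2 + x.2 ^ 2})
    (hV₂c : ContinuousOn V₂ {x : ℝ × ℝ | 1 ≤ x.1 ^ 2 + x.2 ^ 2})
    (hgc : ContinuousOn g {x : ℝ × ℝ | 1 ≤ x.1 ^ 2 + x.2 ^ 2})
    (hgm : Measurable g)
    (hd₁ : ∀ x : ℝ × ℝ, 1 < x.1 ^ 2 + x.2 ^ 2 → HasFDerivAt V₁ (V₁' x) x)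
    (hd₂ : ∀ x : ℝ × ℝ, 1 < x.1 ^ 2 + x.2 ^ 2 → HasFDerivAt V₂ (V₂' x) x)
    (hdiv : ∀ x : ℝ × ℝ, 1 < x.1 ^ 2 + x.2 ^ 2 → V₁' x (1, 0) + V₂' x (0, 1) = g x)
    (h0 : ∀ x : ℝ × ℝ, R ^ 2 ≤ x.1 ^ 2 + x.2 ^ 2 → V₁ x = 0 ∧ V₂ x = 0 ∧ g x = 0) :
    (∫ x in {x : ℝ × ℝ | 1 ≤ x.1 ^ 2 + x.2 ^ 2}, g x)
      = -∫ θ in (0:ℝ)..(2 * π),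
          (V₁ (Real.cos θ, Real.sin θ) * Real.cos θ
            + V₂ (Real.cos θ, Real.sin θ) * Real.sin θ) := by
  have hRpos : (0:ℝ) < R := lt_trans one_pos hR
  set S : Set (ℝ × ℝ) := {x : ℝ × ℝ | 1 ≤ x.1 ^ 2 + x.2 ^ 2} with hS
  have hSclosed : IsClosed S := by
    have : S = (fun x : ℝ × ℝ => x.1 ^ 2 + x.2 ^ 2) ⁻¹' (Ici 1) := rfl
    rw [this]
    exact IsClosed.preimage (by continuity) isClosed_Ici
  have hSm : MeasurableSet S := hSclosed.measurableSet
  -- the polar map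
  set P : ℝ × ℝ → ℝ × ℝ := fun p => (p.1 * Real.cos p.2, p.1 * Real.sin p.2) with hP
  have hPmem : ∀ p : ℝ × ℝ, 1 ≤ p.1 → P p ∈ S := by
    intro p hp
    have : (P p).1 ^ 2 + (P p).2 ^ 2 = p.1 ^ 2 := by
      simp only [P]
      nlinarith [sin_sq_add_cos_sq p.2]
    simp only [S, mem_setOf_eq, this]
    nlinarith
  have hPcont : Continuous P := by fun_prop
  -- the fields in polar coordinates
  set A : ℝ × ℝ → ℝ := fun p => p.1 * (V₁ (P p) * Real.cos p.2 + V₂ (P p) * Real.sin p.2)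
    with hA
  set B : ℝ × ℝ → ℝ := fun p => V₂ (P p) * Real.cos p.2 - V₁ (P p) * Real.sin p.2 with hB
  set G : ℝ × ℝ → ℝ := fun p => p.1 * g (P p) with hG
  -- differentiability of A, B and the divergence identity, for r > 1
  have key : ∀ p : ℝ × ℝ, 1 < p.1 →
      HasFDerivAt A (fderiv ℝ A p) p ∧ HasFDerivAt B (fderiv ℝ B p) p ∧
        fderiv ℝ A p (1, 0) + fderiv ℝ B p (0, 1) = G p := by
    intro p hp
    have hx : 1 < (P p).1 ^ 2 + (P p).2 ^ 2 := by
      have : (P p).1 ^ 2 + (P p).2 ^ 2 = p.1 ^ 2 := by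
        simp only [P]; nlinarith [sin_sq_add_cos_sq p.2]
      rw [this]; nlinarith
    have hcos : HasFDerivAt (fun q : ℝ × ℝ => Real.cos q.2)
        ((-Real.sin p.2) • ContinuousLinearMap.snd ℝ ℝ ℝ) p := by
      exact (Real.hasDerivAt_cos p.2).comp_hasFDerivAt p (hasFDerivAt_snd (𝕜 := ℝ) (p := p))
    have hsin : HasFDerivAt (fun q : ℝ × ℝ => Real.sin q.2)
        ((Real.cos p.2) • ContinuousLinearMap.snd ℝ ℝ ℝ) p := by
      exact (Real.hasDerivAt_sin p.2).comp_hasFDerivAt p (hasFDerivAt_snd (𝕜 := ℝ) (p := p))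
    have hP1 : HasFDerivAt (fun q : ℝ × ℝ => q.1 * Real.cos q.2)
        (Real.cos p.2 • ContinuousLinearMap.fst ℝ ℝ ℝ
          + p.1 • ((-Real.sin p.2) • ContinuousLinearMap.snd ℝ ℝ ℝ)) p := by
      have := (hasFDerivAt_fst (𝕜 := ℝ) (p := p)).mul hcos
      rw [add_comm]
      exact this
    have hP2 : HasFDerivAt (fun q : ℝ × ℝ => q.1 * Real.sin q.2)
        (Real.sin p.2 • ContinuousLinearMap.fst ℝ ℝ ℝ
          + p.1 • ((Real.cos p.2) • ContinuousLinearMap.snd ℝ ℝ ℝ)) p := by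
      have := (hasFDerivAt_fst (𝕜 := ℝ) (p := p)).mul hsin
      rw [add_comm]
      exact this
    have hPd : HasFDerivAt P ((Real.cos p.2 • ContinuousLinearMap.fst ℝ ℝ ℝ
          + p.1 • ((-Real.sin p.2) • ContinuousLinearMap.snd ℝ ℝ ℝ)).prod
        (Real.sin p.2 • ContinuousLinearMap.fst ℝ ℝ ℝ
          + p.1 • ((Real.cos p.2) • ContinuousLinearMap.snd ℝ ℝ ℝ))) p := hP1.prodMk hP2
    have hV1P : HasFDerivAt (fun q => V₁ (P q)) ((V₁' (P p)).comp _) p :=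
      (hd₁ (P p) hx).comp p hPd
    have hV2P : HasFDerivAt (fun q => V₂ (P q)) ((V₂' (P p)).comp _) p :=
      (hd₂ (P p) hx).comp p hPd
    have hAd : HasFDerivAt A _ p :=
      (hasFDerivAt_fst (𝕜 := ℝ) (p := p)).mul ((hV1P.mul hcos).add (hV2P.mul hsin))
    have hBd : HasFDerivAt B _ p := (hV2P.mul hcos).sub (hV1P.mul hsin)
    refine ⟨hAd.fderiv ▸ hAd, hBd.fderiv ▸ hBd, ?_⟩
    rw [hAd.fderiv, hBd.fderiv]
    have e1 : ∀ L : (ℝ × ℝ) →L[ℝ] ℝ, ∀ v : ℝ × ℝ,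
        ((L.comp ((Real.cos p.2 • ContinuousLinearMap.fst ℝ ℝ ℝ
          + p.1 • ((-Real.sin p.2) • ContinuousLinearMap.snd ℝ ℝ ℝ)).prod
        (Real.sin p.2 • ContinuousLinearMap.fst ℝ ℝ ℝ
          + p.1 • ((Real.cos p.2) • ContinuousLinearMap.snd ℝ ℝ ℝ)))) v)
        = L (Real.cos p.2 * v.1 + p.1 * (-Real.sin p.2 * v.2),
              Real.sin p.2 * v.1 + p.1 * (Real.cos p.2 * v.2)) := by
      intro L v
      simp [ContinuousLinearMap.comp_apply, ContinuousLinearMap.prod_apply, smul_eq_mul]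
    simp only [ContinuousLinearMap.add_apply, ContinuousLinearMap.smul_apply,
      ContinuousLinearMap.sub_apply, ContinuousLinearMap.coe_fst', ContinuousLinearMap.coe_snd',
      smul_eq_mul, e1]
    ring_nf
    rw [clm_expand (V₁' (P p)) (Real.cos p.2) (Real.sin p.2),
      clm_expand (V₂' (P p)) (Real.cos p.2) (Real.sin p.2),
      clm_expand (V₁' (P p)) (-(p.1 * Real.sin p.2)) (p.1 * Real.cos p.2),
      clm_expand (V₂' (P p)) (-(p.1 * Real.sin p.2)) (p.1 * Real.cos p.2)]
    have hdv := hdiv (P p) hx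
    linear_combination p.1 * ((V₁' (P p)) (1, 0) + (V₂' (P p)) (0, 1))
        * (Real.sin_sq_add_cos_sq p.2) + p.1 * hdv
  have hPsq : ∀ p : ℝ × ℝ, (P p).1 ^ 2 + (P p).2 ^ 2 = p.1 ^ 2 := by
    intro p; simp only [P]; nlinarith [sin_sq_add_cos_sq p.2]
  -- a uniform bound for `g` on `S`
  obtain ⟨C₀, hC₀⟩ : ∃ C, ∀ x ∈ S ∩ Metric.closedBall 0 R, ‖g x‖ ≤ C :=
    ((isCompact_closedBall (0 : ℝ × ℝ) R).inter_left hSclosed).exists_bound_of_continuousOn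
      (hgc.mono inter_subset_left)
  set C : ℝ := max C₀ 0 with hCdef
  have hCnn : 0 ≤ C := le_max_right _ _
  have hgb : ∀ x ∈ S, ‖g x‖ ≤ C := by
    intro x hxS
    by_cases hx : x ∈ Metric.closedBall (0 : ℝ × ℝ) R
    · exact le_trans (hC₀ x ⟨hxS, hx⟩) (le_max_left _ _)
    · have hxn : R < ‖x‖ := by
        simpa [Metric.mem_closedBall, dist_zero_right] using hx
      have hm : R < max |x.1| |x.2| := by
        rw [Prod.norm_def] at hxn; simpa [Real.norm_eq_abs] using hxn
      have hRs : R ^ 2 ≤ x.1 ^ 2 + x.2 ^ 2 := by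
        rcases max_cases |x.1| |x.2| with ⟨he, _⟩ | ⟨he, _⟩ <;> rw [he] at hm <;>
          nlinarith [abs_nonneg x.1, abs_nonneg x.2, sq_abs x.1, sq_abs x.2]
      rw [(h0 x hRs).2.2]; simpa using hCnn
  -- the integrand after passing to polar coordinates
  set F : ℝ × ℝ → ℝ := fun p => p.1 * (S.indicator g) (P p) with hF
  have hFmeas : Measurable F := measurable_fst.mul ((hgm.indicator hSm).comp hPcont.measurable)
  have hFzero_low : ∀ p : ℝ × ℝ, 0 < p.1 → p.1 < 1 → F p = 0 := by
    intro p h1 h2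
    have : P p ∉ S := by
      simp only [S, mem_setOf_eq, hPsq p, not_le]; nlinarith
    simp [F, indicator_of_notMem this]
  have hFzero_hi : ∀ p : ℝ × ℝ, R < p.1 → F p = 0 := by
    intro p h1
    have h2 : R ^ 2 ≤ (P p).1 ^ 2 + (P p).2 ^ 2 := by rw [hPsq p]; nlinarith
    have := (h0 (P p) h2).2.2
    simp [F, Set.indicator_apply, this]
  have hFK : IntegrableOn F (Icc (1:ℝ) R ×ˢ Icc (-π) π) := by
    apply Measure.integrableOn_of_bounded (M := R * C)
    · exact (((isCompact_Icc).prod isCompact_Icc).measure_lt_top).ne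
    · exact hFmeas.aestronglyMeasurable
    · refine (ae_restrict_mem ((measurableSet_Icc).prod measurableSet_Icc)).mono ?_
      rintro p ⟨hp1, _⟩
      have h1 : ‖(S.indicator g) (P p)‖ ≤ C := by
        by_cases hmem : P p ∈ S
        · rw [Set.indicator_of_mem hmem]; exact hgb _ hmem
        · rw [Set.indicator_of_notMem hmem]; simpa using hCnn
      have h2 : ‖F p‖ = |p.1| * ‖(S.indicator g) (P p)‖ := by
        simp [F, Real.norm_eq_abs, abs_mul]
      rw [h2]
      have h3 : |p.1| ≤ R := abs_le.mpr ⟨by linarith [hp1.1], hp1.2⟩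
      exact mul_le_mul h3 h1 (norm_nonneg _) hRpos.le
  have hFtarget : IntegrableOn F polarCoord.target := by
    have hsub : polarCoord.target ⊆ (Icc (1:ℝ) R ×ˢ Icc (-π) π)
        ∪ (polarCoord.target \ Icc (1:ℝ) R ×ˢ Icc (-π) π) := by
      intro p hp
      by_cases h : p ∈ Icc (1:ℝ) R ×ˢ Icc (-π) π
      exacts [Or.inl h, Or.inr ⟨hp, h⟩]
    refine (IntegrableOn.union hFK ?_).mono_set hsub
    rw [integrableOn_congr_fun (g := fun _ => (0:ℝ)) ?_
      (polarCoord.open_target.measurableSet.diff (measurableSet_Icc.prod measurableSet_Icc))]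
    · exact integrableOn_zero
    · rintro p ⟨hpt, hpn⟩
      have hpt' : p.1 ∈ Ioi (0:ℝ) ∧ p.2 ∈ Ioo (-π) π := Set.mem_prod.mp hpt
      have hp2 : p.2 ∈ Icc (-π) π := Ioo_subset_Icc_self hpt'.2
      have hp1 : p.1 ∉ Icc (1:ℝ) R := fun h => hpn (Set.mem_prod.mpr ⟨h, hp2⟩)
      rw [mem_Icc, not_and_or, not_le, not_le] at hp1
      rcases hp1 with h | h
      · exact hFzero_low p hpt'.1 h
      · exact hFzero_hi p h
  -- polar change of variables
  have step1 : ∫ x in S, g x = ∫ p in Ioi (0:ℝ) ×ˢ Ioo (-π) π, F p := by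
    rw [← integral_indicator hSm, ← integral_comp_polarCoord_symm (S.indicator g)]
    rfl
  have step2 : ∫ p in Ioi (0:ℝ) ×ˢ Ioo (-π) π, F p
      = ∫ r in Ioi (0:ℝ), ∫ θ in Ioo (-π) π, F (r, θ) := setIntegral_prod F hFtarget
  have step3 : ∫ r in Ioi (0:ℝ), ∫ θ in Ioo (-π) π, F (r, θ)
      = ∫ r in Icc (1:ℝ) R, ∫ θ in Ioo (-π) π, F (r, θ) := by
    refine setIntegral_eq_of_subset_of_forall_diff_eq_zero measurableSet_Ioi ?_ ?_
    · intro r hr; exact lt_of_lt_of_le one_pos (hr.1)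
    · rintro r ⟨hr0, hrn⟩
      rw [mem_Icc, not_and_or, not_le, not_le] at hrn
      have : ∀ θ : ℝ, F (r, θ) = 0 := by
        intro θ
        rcases hrn with h | h
        · exact hFzero_low (r, θ) hr0 h
        · exact hFzero_hi (r, θ) h
      simp [this]
  have step4 : ∫ r in Icc (1:ℝ) R, ∫ θ in Ioo (-π) π, F (r, θ)
      = ∫ r in (1:ℝ)..R, ∫ θ in Ioo (-π) π, F (r, θ) := by
    rw [intervalIntegral.integral_of_le hR.le, integral_Icc_eq_integral_Ioc]
  have step5 : ∀ r : ℝ, ∫ θ in Ioo (-π) π, F (r, θ) = ∫ θ in (0:ℝ)..(2*π), F (r, θ) := by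
    intro r
    have per : Function.Periodic (fun θ => F (r, θ)) (2*π) := by
      intro θ
      simp [F, P, Real.cos_add_two_pi, Real.sin_add_two_pi]
    have h1 := per.intervalIntegral_add_eq (-π) 0
    have e1 : -π + 2*π = π := by ring
    rw [e1, zero_add] at h1
    rw [← integral_Ioc_eq_integral_Ioo,
      ← intervalIntegral.integral_of_le (by linarith [pi_pos] : -π ≤ π), h1]
  -- continuity of A, B, G on the rectangle
  have hmaps : Set.MapsTo P (uIcc (1:ℝ) R ×ˢ uIcc 0 (2*π)) S := by
    intro p hp
    apply hPmem
    have h := (Set.mem_prod.mp hp).1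
    rw [uIcc_of_le hR.le] at h
    exact h.1
  have hV₁P : ContinuousOn (fun p => V₁ (P p)) (uIcc (1:ℝ) R ×ˢ uIcc 0 (2*π)) :=
    hV₁c.comp hPcont.continuousOn hmaps
  have hV₂P : ContinuousOn (fun p => V₂ (P p)) (uIcc (1:ℝ) R ×ˢ uIcc 0 (2*π)) :=
    hV₂c.comp hPcont.continuousOn hmaps
  have hAc : ContinuousOn A (uIcc (1:ℝ) R ×ˢ uIcc 0 (2*π)) := by
    exact (continuous_fst.continuousOn).mul
      ((hV₁P.mul (continuous_cos.comp continuous_snd).continuousOn).add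
        (hV₂P.mul (continuous_sin.comp continuous_snd).continuousOn))
  have hBc : ContinuousOn B (uIcc (1:ℝ) R ×ˢ uIcc 0 (2*π)) := by
    exact (hV₂P.mul (continuous_cos.comp continuous_snd).continuousOn).sub
      (hV₁P.mul (continuous_sin.comp continuous_snd).continuousOn)
  have hGc : ContinuousOn G (uIcc (1:ℝ) R ×ˢ uIcc 0 (2*π)) :=
    (continuous_fst.continuousOn).mul (hgc.comp hPcont.continuousOn hmaps)
  have hGint : IntegrableOn G (uIcc (1:ℝ) R ×ˢ uIcc 0 (2*π)) :=
    hGc.integrableOn_compact (isCompact_uIcc.prod isCompact_uIcc)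
  -- the divergence integrand agrees a.e. with G on the rectangle
  have hnull : volume {p : ℝ × ℝ | p.1 = 1} = 0 := by
    have he : {p : ℝ × ℝ | p.1 = 1} = ({1} : Set ℝ) ×ˢ (univ : Set ℝ) := by
      ext p; rw [Set.mem_prod]; simp
    rw [he, MeasureTheory.Measure.volume_eq_prod ℝ ℝ, Measure.prod_prod, Real.volume_singleton, zero_mul]
  have hae1 : ∀ᵐ p ∂(volume.restrict (uIcc (1:ℝ) R ×ˢ uIcc 0 (2*π))), p.1 ≠ 1 := by
    refine ae_restrict_of_ae ?_
    rw [ae_iff]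
    convert hnull using 2
    ext p; simp
  have hDiveq : (fun p => fderiv ℝ A p (1, 0) + fderiv ℝ B p (0, 1))
      =ᵐ[volume.restrict (uIcc (1:ℝ) R ×ˢ uIcc 0 (2*π))] G := by
    filter_upwards [ae_restrict_mem ((measurableSet_uIcc).prod measurableSet_uIcc), hae1]
      with p hmem hne
    have h1 : 1 ≤ p.1 := by
      have h := (Set.mem_prod.mp hmem).1
      rw [uIcc_of_le hR.le] at h
      exact h.1
    exact (key p (lt_of_le_of_ne h1 (Ne.symm hne))).2.2
  have hDivint : IntegrableOn (fun p => fderiv ℝ A p (1, 0) + fderiv ℝ B p (0, 1))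
      (uIcc (1:ℝ) R ×ˢ uIcc 0 (2*π)) := hGint.congr hDiveq.symm
  -- rectangle divergence theorem
  have hrect := integral2_divergence_prod_of_hasFDerivAt_off_countable A B
    (fun p => fderiv ℝ A p) (fun p => fderiv ℝ B p) 1 0 R (2*π) ∅ Set.countable_empty
    hAc hBc
    (by
      rintro p ⟨hp, -⟩
      have h := (Set.mem_prod.mp hp).1.1
      rw [min_eq_left hR.le] at h
      exact (key p h).1)
    (by
      rintro p ⟨hp, -⟩
      have h := (Set.mem_prod.mp hp).1.1
      rw [min_eq_left hR.le] at h
      exact (key p h).2.1)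
    hDivint
  -- simplify the boundary terms
  have hBper : ∀ r : ℝ, B (r, 2*π) = B (r, 0) := by
    intro r; simp [B, P, Real.cos_two_pi, Real.sin_two_pi]
  have hAR : ∀ θ : ℝ, A (R, θ) = 0 := by
    intro θ
    have h2 : R ^ 2 ≤ (P (R, θ)).1 ^ 2 + (P (R, θ)).2 ^ 2 := le_of_eq (hPsq (R, θ)).symm
    have h := h0 (P (R, θ)) h2
    simp [A, h.1, h.2.1]
  have hA1 : ∀ θ : ℝ, A (1, θ) = V₁ (Real.cos θ, Real.sin θ) * Real.cos θ
      + V₂ (Real.cos θ, Real.sin θ) * Real.sin θ := by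
    intro θ; simp [A, P]
  have hb1 : (∫ x in (1:ℝ)..R, B (x, 2*π)) = ∫ x in (1:ℝ)..R, B (x, 0) :=
    intervalIntegral.integral_congr fun x _ => hBper x
  have hb2 : (∫ y in (0:ℝ)..(2*π), A (R, y)) = 0 := by
    rw [intervalIntegral.integral_congr (g := fun _ => (0:ℝ)) fun y _ => hAR y]
    simp
  rw [hb1, hb2] at hrect
  have hfin : ∫ r in (1:ℝ)..R, ∫ θ in (0:ℝ)..(2*π), F (r, θ)
      = ∫ r in (1:ℝ)..R, ∫ θ in (0:ℝ)..(2*π),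
          (fderiv ℝ A (r, θ) (1, 0) + fderiv ℝ B (r, θ) (0, 1)) := by
    refine intervalIntegral.integral_congr_ae (Filter.Eventually.of_forall fun r => ?_)
    intro hr
    rw [uIoc_of_le hR.le] at hr
    refine intervalIntegral.integral_congr fun θ _ => ?_
    have h1 : (1:ℝ) < r := hr.1
    have hFG : F (r, θ) = G (r, θ) := by
      simp only [F, G]
      rw [Set.indicator_of_mem (hPmem (r, θ) (le_of_lt h1))]
    rw [hFG, ← (key (r, θ) h1).2.2]
  calc ∫ x in S, g x
      = ∫ r in (1:ℝ)..R, ∫ θ in Ioo (-π) π, F (r, θ) := by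
        rw [step1, step2, step3, step4]
    _ = ∫ r in (1:ℝ)..R, ∫ θ in (0:ℝ)..(2*π), F (r, θ) :=
        intervalIntegral.integral_congr fun r _ => step5 r
    _ = ∫ r in (1:ℝ)..R, ∫ θ in (0:ℝ)..(2*π),
          (fderiv ℝ A (r, θ) (1, 0) + fderiv ℝ B (r, θ) (0, 1)) := hfin
    _ = (((∫ x in (1:ℝ)..R, B (x, 0)) - ∫ x in (1:ℝ)..R, B (x, 0)) + 0)
          - ∫ y in (0:ℝ)..(2*π), A (1, y) := hrect
    _ = -∫ y in (0:ℝ)..(2*π), A (1, y) := by ring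
    _ = -∫ θ in (0:ℝ)..(2*π), (V₁ (Real.cos θ, Real.sin θ) * Real.cos θ
          + V₂ (Real.cos θ, Real.sin θ) * Real.sin θ) := by
        rw [intervalIntegral.integral_congr fun θ _ => hA1 θ]


theorem clm_expand' (L : (ℝ × ℝ) →L[ℝ] ℝ) (v : ℝ × ℝ) :
    L v = v.1 * L (1, 0) + v.2 * L (0, 1) := by
  have h : v = v.1 • ((1:ℝ), (0:ℝ)) + v.2 • ((0:ℝ), (1:ℝ)) := by
    simp [Prod.ext_iff]
  conv_lhs => rw [h]
  rw [map_add, L.map_smul, L.map_smul, smul_eq_mul, smul_eq_mul]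

/-- integrability of a bounded measurable function vanishing outside a ball, on a closed set -/
theorem integrableOn_S_helper (gf : ℝ × ℝ → ℝ) {S : Set (ℝ × ℝ)}
    (hSclosed : IsClosed S) (hm : Measurable gf) (hc : ContinuousOn gf S)
    (R : ℝ) (hR : 0 < R) (h0 : ∀ x : ℝ × ℝ, R ^ 2 ≤ x.1 ^ 2 + x.2 ^ 2 → gf x = 0) :
    IntegrableOn gf S := by
  have hSm : MeasurableSet S := hSclosed.measurableSet
  obtain ⟨C₀, hC₀⟩ : ∃ C, ∀ x ∈ S ∩ Metric.closedBall 0 R, ‖gf x‖ ≤ C :=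
    ((isCompact_closedBall (0 : ℝ × ℝ) R).inter_left hSclosed).exists_bound_of_continuousOn
      (hc.mono inter_subset_left)
  have h1 : IntegrableOn gf (S ∩ Metric.closedBall 0 R) := by
    apply Measure.integrableOn_of_bounded (M := C₀)
    · exact ((measure_mono inter_subset_right).trans_lt
        (isCompact_closedBall (0 : ℝ × ℝ) R).measure_lt_top).ne
    · exact hm.aestronglyMeasurable
    · exact (ae_restrict_mem (hSm.inter measurableSet_closedBall)).mono fun x hx => hC₀ x hx
  have h2 : IntegrableOn gf (S \ Metric.closedBall 0 R) := by
    rw [integrableOn_congr_fun (g := fun _ => (0:ℝ)) ?_ (hSm.diff measurableSet_closedBall)]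
    · exact integrableOn_zero
    · rintro x ⟨-, hx⟩
      have hxn : R < ‖x‖ := by
        simpa [Metric.mem_closedBall, dist_zero_right] using hx
      have hm' : R < max |x.1| |x.2| := by
        rw [Prod.norm_def] at hxn; simpa [Real.norm_eq_abs] using hxn
      refine h0 x ?_
      rcases max_cases |x.1| |x.2| with ⟨he, _⟩ | ⟨he, _⟩ <;> rw [he] at hm' <;>
        nlinarith [abs_nonneg x.1, abs_nonneg x.2, sq_abs x.1, sq_abs x.2]
  exact (h1.union h2).mono_set fun x hx => by
    by_cases h : x ∈ Metric.closedBall (0:ℝ×ℝ) R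
    exacts [Or.inl ⟨hx, h⟩, Or.inr ⟨hx, h⟩]

/-- for a smooth, divergence-free, square-integrable field `u` on the
exterior `F₀` of the unit disk, tangent to the circle, with `curl u = ω ∈ C_c^∞(F₀)`,
and any divergence-free `Ψ ∈ C¹_c(closure F₀)`:
`∫_{F₀} u·((u·∇)Ψ) = -½ ∮_{|x|=1} |u·n^⊥|² (Ψ·n) ds + ∫_{F₀} ω (u·Ψ^⊥)`. -/
theorem stmt_13
    (ω : ℝ × ℝ → ℝ) (hωsmooth : ContDiff ℝ (⊤ : ℕ∞) ω) (hωsupp : HasCompactSupport ω)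
    (hωin : tsupport ω ⊆ {x : ℝ × ℝ | 1 < x.1 ^ 2 + x.2 ^ 2})
    (u : ℝ × ℝ → ℝ × ℝ)
    (husmooth : ContDiffOn ℝ (⊤ : ℕ∞) u {x : ℝ × ℝ | 1 ≤ x.1 ^ 2 + x.2 ^ 2})
    (hudiv : ∀ x : ℝ × ℝ, 1 ≤ x.1 ^ 2 + x.2 ^ 2 →
      fderiv ℝ (fun y => (u y).1) x (1, 0) + fderiv ℝ (fun y => (u y).2) x (0, 1) = 0)
    (hucurl : ∀ x : ℝ × ℝ, 1 ≤ x.1 ^ 2 + x.2 ^ 2 →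
      fderiv ℝ (fun y => (u y).2) x (1, 0) - fderiv ℝ (fun y => (u y).1) x (0, 1) = ω x)
    (huL2 : IntegrableOn (fun x => (u x).1 ^ 2 + (u x).2 ^ 2)
      {x : ℝ × ℝ | 1 ≤ x.1 ^ 2 + x.2 ^ 2} volume)
    (hutang : ∀ x : ℝ × ℝ, x.1 ^ 2 + x.2 ^ 2 = 1 → (u x).1 * x.1 + (u x).2 * x.2 = 0)
    (Ψ : ℝ × ℝ → ℝ × ℝ) (hΨreg : ContDiff ℝ 1 Ψ) (hΨsupp : HasCompactSupport Ψ)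
    (hΨdiv : ∀ x : ℝ × ℝ, 1 ≤ x.1 ^ 2 + x.2 ^ 2 →
      fderiv ℝ (fun y => (Ψ y).1) x (1, 0) + fderiv ℝ (fun y => (Ψ y).2) x (0, 1) = 0) :
    (∫ x in {x : ℝ × ℝ | 1 ≤ x.1 ^ 2 + x.2 ^ 2},
        ((u x).1 * fderiv ℝ (fun y => (Ψ y).1) x (u x)
          + (u x).2 * fderiv ℝ (fun y => (Ψ y).2) x (u x)))
      = -(1 / 2) * (∫ θ in (0 : ℝ)..(2 * Real.pi),
          ((u (Real.cos θ, Real.sin θ)).1 * Real.sin θ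
            - (u (Real.cos θ, Real.sin θ)).2 * Real.cos θ) ^ 2
          * (-((Ψ (Real.cos θ, Real.sin θ)).1 * Real.cos θ
              + (Ψ (Real.cos θ, Real.sin θ)).2 * Real.sin θ)))
        + ∫ x in {x : ℝ × ℝ | 1 ≤ x.1 ^ 2 + x.2 ^ 2},
            ω x * ((u x).1 * (-(Ψ x).2) + (u x).2 * (Ψ x).1) := by
  set S : Set (ℝ × ℝ) := {x : ℝ × ℝ | 1 ≤ x.1 ^ 2 + x.2 ^ 2} with hSdef
  have hSclosed : IsClosed S := by
    have : S = (fun x : ℝ × ℝ => x.1 ^ 2 + x.2 ^ 2) ⁻¹' (Ici 1) := rfl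
    rw [this]; exact IsClosed.preimage (by continuity) isClosed_Ici
  have hSm : MeasurableSet S := hSclosed.measurableSet
  -- measurable retraction onto S
  set ρ : ℝ × ℝ → ℝ × ℝ := fun x => if 1 ≤ x.1 ^ 2 + x.2 ^ 2 then x
    else if x = 0 then (1, 0) else (Real.sqrt (x.1 ^ 2 + x.2 ^ 2))⁻¹ • x with hρdef
  have hρid : ∀ x ∈ S, ρ x = x := fun x hx => if_pos hx
  have hρS : ∀ x : ℝ × ℝ, ρ x ∈ S := by
    intro x
    by_cases h1 : 1 ≤ x.1 ^ 2 + x.2 ^ 2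
    · rw [hρid x h1]; exact h1
    by_cases h2 : x = 0
    · have : ρ x = ((1:ℝ), (0:ℝ)) := by rw [hρdef]; simp [h1, h2]
      rw [this]; show (1:ℝ) ≤ 1 ^ 2 + 0 ^ 2; norm_num
    · have hs0 : 0 < x.1 ^ 2 + x.2 ^ 2 := by
        have hne : x.1 ≠ 0 ∨ x.2 ≠ 0 := by
          by_contra hc
          push_neg at hc
          exact h2 (Prod.ext hc.1 hc.2)
        rcases hne with h | h
        · nlinarith [pow_two_pos_of_ne_zero h, sq_nonneg x.2]
        · nlinarith [pow_two_pos_of_ne_zero h, sq_nonneg x.1]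
      have : ρ x = (Real.sqrt (x.1 ^ 2 + x.2 ^ 2))⁻¹ • x := by rw [hρdef]; simp [h1, h2]
      rw [this]
      show (1:ℝ) ≤ ((Real.sqrt (x.1 ^ 2 + x.2 ^ 2))⁻¹ • x).1 ^ 2
        + ((Real.sqrt (x.1 ^ 2 + x.2 ^ 2))⁻¹ • x).2 ^ 2
      have hsq : Real.sqrt (x.1 ^ 2 + x.2 ^ 2) ^ 2 = x.1 ^ 2 + x.2 ^ 2 :=
        Real.sq_sqrt hs0.le
      have hsp : 0 < Real.sqrt (x.1 ^ 2 + x.2 ^ 2) := Real.sqrt_pos.mpr hs0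
      rw [Prod.smul_fst, Prod.smul_snd, smul_eq_mul, smul_eq_mul]
      have hkey : ((Real.sqrt (x.1 ^ 2 + x.2 ^ 2))⁻¹ * x.1) ^ 2
          + ((Real.sqrt (x.1 ^ 2 + x.2 ^ 2))⁻¹ * x.2) ^ 2 = 1 := by
        rw [mul_pow, mul_pow, ← mul_add, inv_pow, hsq]
        exact inv_mul_cancel₀ hs0.ne'
      rw [hkey]
  have hρmeas : Measurable ρ := by
    apply Measurable.ite hSm measurable_id
    have h0m : MeasurableSet {x : ℝ × ℝ | x = 0} := by
      simp only [Set.setOf_eq_eq_singleton]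
      exact measurableSet_singleton 0
    exact Measurable.ite h0m measurable_const
      ((((measurable_fst.pow_const 2).add (measurable_snd.pow_const 2)).sqrt.inv).smul
        measurable_id)
  -- the modified field
  set u' : ℝ × ℝ → ℝ × ℝ := fun x => u (ρ x) with hu'def
  have hu'eq : ∀ x ∈ S, u' x = u x := fun x hx => by rw [hu'def]; simp only [hρid x hx]
  have hu'meas : Measurable u' := by
    have hcont : Continuous (S.restrict u) := husmooth.continuousOn.restrict
    exact hcont.measurable.comp ((hρmeas.subtype_mk : Measurable fun x => (⟨ρ x, hρS x⟩ : S)))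
  have hu'cont : ContinuousOn u' S := husmooth.continuousOn.congr hu'eq
  have hu'1m : Measurable fun x => (u' x).1 := measurable_fst.comp hu'meas
  have hu'2m : Measurable fun x => (u' x).2 := measurable_snd.comp hu'meas
  have hu'1c : ContinuousOn (fun x => (u' x).1) S := continuous_fst.comp_continuousOn hu'cont
  have hu'2c : ContinuousOn (fun x => (u' x).2) S := continuous_snd.comp_continuousOn hu'cont
  -- neighborhoods and derivatives at interior points
  have hSnhds : ∀ x : ℝ × ℝ, 1 < x.1 ^ 2 + x.2 ^ 2 → S ∈ nhds x := by
    intro x hx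
    exact mem_nhds_iff.mpr ⟨{y : ℝ × ℝ | 1 < y.1 ^ 2 + y.2 ^ 2}, fun y hy => show y ∈ S from le_of_lt (show (1:ℝ) < y.1 ^ 2 + y.2 ^ 2 from hy),
      isOpen_lt continuous_const (by continuity), hx⟩
  have hu'congr : ∀ x : ℝ × ℝ, 1 < x.1 ^ 2 + x.2 ^ 2 → u' =ᶠ[nhds x] u := fun x hx =>
    Filter.eventuallyEq_of_mem (hSnhds x hx) hu'eq
  have hu1d : ∀ x : ℝ × ℝ, 1 < x.1 ^ 2 + x.2 ^ 2 →
      HasFDerivAt (fun y => (u' y).1) (fderiv ℝ (fun y => (u y).1) x) x := by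
    intro x hx
    have hca : ContDiffAt ℝ (⊤ : ℕ∞) u x := husmooth.contDiffAt (hSnhds x hx)
    have h1 : DifferentiableAt ℝ (fun y => (u y).1) x :=
      ((hca.differentiableAt (by simp)).fst)
    exact h1.hasFDerivAt.congr_of_eventuallyEq
      ((hu'congr x hx).mono fun y hy => congrArg Prod.fst hy)
  have hu2d : ∀ x : ℝ × ℝ, 1 < x.1 ^ 2 + x.2 ^ 2 →
      HasFDerivAt (fun y => (u' y).2) (fderiv ℝ (fun y => (u y).2) x) x := by
    intro x hx
    have hca : ContDiffAt ℝ (⊤ : ℕ∞) u x := husmooth.contDiffAt (hSnhds x hx)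
    have h1 : DifferentiableAt ℝ (fun y => (u y).2) x :=
      ((hca.differentiableAt (by simp)).snd)
    exact h1.hasFDerivAt.congr_of_eventuallyEq
      ((hu'congr x hx).mono fun y hy => congrArg Prod.snd hy)
  -- Ψ components
  have hΨ1 : ContDiff ℝ 1 (fun y => (Ψ y).1) := contDiff_fst.comp hΨreg
  have hΨ2 : ContDiff ℝ 1 (fun y => (Ψ y).2) := contDiff_snd.comp hΨreg
  have hΨ1d : ∀ x : ℝ × ℝ, HasFDerivAt (fun y => (Ψ y).1) (fderiv ℝ (fun y => (Ψ y).1) x) x :=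
    fun x => (hΨ1.differentiable one_ne_zero x).hasFDerivAt
  have hΨ2d : ∀ x : ℝ × ℝ, HasFDerivAt (fun y => (Ψ y).2) (fderiv ℝ (fun y => (Ψ y).2) x) x :=
    fun x => (hΨ2.differentiable one_ne_zero x).hasFDerivAt
  have hΨ1fc : Continuous fun x => fderiv ℝ (fun y => (Ψ y).1) x := hΨ1.continuous_fderiv one_ne_zero
  have hΨ2fc : Continuous fun x => fderiv ℝ (fun y => (Ψ y).2) x := hΨ2.continuous_fderiv one_ne_zero
  have hΨc : Continuous Ψ := hΨreg.continuous
  have hΨ1c : Continuous fun x => (Ψ x).1 := continuous_fst.comp hΨc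
  have hΨ2c : Continuous fun x => (Ψ x).2 := continuous_snd.comp hΨc
  -- the fields
  set f : ℝ × ℝ → ℝ := fun x => (u' x).1 * (-(Ψ x).2) + (u' x).2 * (Ψ x).1 with hfdef
  set e : ℝ × ℝ → ℝ := fun x => (1/2) * ((u' x).1 * (u' x).1 + (u' x).2 * (u' x).2) with hedef
  set V₁ : ℝ × ℝ → ℝ := fun x => f x * (-(u' x).2) + e x * (Ψ x).1 with hV₁def
  set V₂ : ℝ × ℝ → ℝ := fun x => f x * (u' x).1 + e x * (Ψ x).2 with hV₂def
  set g : ℝ × ℝ → ℝ := fun x => (u' x).1 * fderiv ℝ (fun y => (Ψ y).1) x (u' x)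
      + (u' x).2 * fderiv ℝ (fun y => (Ψ y).2) x (u' x) - ω x * f x with hgdef
  -- continuity on S
  have hfc : ContinuousOn f S := (hu'1c.mul hΨ2c.neg.continuousOn).add
    (hu'2c.mul hΨ1c.continuousOn)
  have hec : ContinuousOn e S :=
    (continuousOn_const.mul ((hu'1c.mul hu'1c).add (hu'2c.mul hu'2c)))
  have hV₁c : ContinuousOn V₁ S := (hfc.mul hu'2c.neg).add (hec.mul hΨ1c.continuousOn)
  have hV₂c : ContinuousOn V₂ S := (hfc.mul hu'1c).add (hec.mul hΨ2c.continuousOn)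
  have happly1 : Measurable fun x => fderiv ℝ (fun y => (Ψ y).1) x (u' x) :=
    (isBoundedBilinearMap_apply.continuous.measurable).comp
      (hΨ1fc.measurable.prodMk hu'meas)
  have happly2 : Measurable fun x => fderiv ℝ (fun y => (Ψ y).2) x (u' x) :=
    (isBoundedBilinearMap_apply.continuous.measurable).comp
      (hΨ2fc.measurable.prodMk hu'meas)
  have hfm : Measurable f := (hu'1m.mul hΨ2c.neg.measurable).add (hu'2m.mul hΨ1c.measurable)
  have hem : Measurable e := measurable_const.mul ((hu'1m.mul hu'1m).add (hu'2m.mul hu'2m))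
  have hV₁m : Measurable V₁ := (hfm.mul hu'2m.neg).add (hem.mul hΨ1c.measurable)
  have hV₂m : Measurable V₂ := (hfm.mul hu'1m).add (hem.mul hΨ2c.measurable)
  have hgm : Measurable g := ((hu'1m.mul happly1).add (hu'2m.mul happly2)).sub
    (hωsmooth.continuous.measurable.mul hfm)
  have happly1c : ContinuousOn (fun x => fderiv ℝ (fun y => (Ψ y).1) x (u' x)) S :=
    hΨ1fc.continuousOn.clm_apply hu'cont
  have happly2c : ContinuousOn (fun x => fderiv ℝ (fun y => (Ψ y).2) x (u' x)) S :=
    hΨ2fc.continuousOn.clm_apply hu'cont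
  have hgc : ContinuousOn g S := ((hu'1c.mul happly1c).add (hu'2c.mul happly2c)).sub
    (hωsmooth.continuous.continuousOn.mul hfc)
  -- support bound
  obtain ⟨M₀, hM₀⟩ := (hΨsupp.union hωsupp).isBounded.subset_closedBall (0 : ℝ × ℝ)
  set M : ℝ := max M₀ 0 with hMdef
  have hMnn : (0:ℝ) ≤ M := le_max_right _ _
  have hMball : tsupport Ψ ∪ tsupport ω ⊆ Metric.closedBall 0 M :=
    hM₀.trans (Metric.closedBall_subset_closedBall (le_max_left _ _))
  set R : ℝ := 2 * M + 2 with hRdef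
  have hR : 1 < R := by simp only [hRdef]; nlinarith
  have hout : ∀ x : ℝ × ℝ, R ^ 2 ≤ x.1 ^ 2 + x.2 ^ 2 → x ∉ tsupport Ψ ∧ x ∉ tsupport ω := by
    intro x hx
    have hR2 : R ^ 2 = (2 * M + 2) ^ 2 := by rw [hRdef]
    have hnorm : M < ‖x‖ := by
      by_contra hc
      push_neg at hc
      have h1 : |x.1| ≤ M := by
        rw [← Real.norm_eq_abs]; exact (norm_fst_le x).trans hc
      have h2 : |x.2| ≤ M := by
        rw [← Real.norm_eq_abs]; exact (norm_snd_le x).trans hc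
      nlinarith [abs_nonneg x.1, abs_nonneg x.2, sq_abs x.1, sq_abs x.2]
    have hnb : x ∉ Metric.closedBall (0 : ℝ × ℝ) M := by
      simp [Metric.mem_closedBall, dist_zero_right, not_le, hnorm]
    exact ⟨fun h => hnb (hMball (Or.inl h)), fun h => hnb (hMball (Or.inr h))⟩
  -- vanishing of Ψ, its derivatives, and ω far away
  have hΨ0 : ∀ x : ℝ × ℝ, R ^ 2 ≤ x.1 ^ 2 + x.2 ^ 2 → Ψ x = 0 ∧
      fderiv ℝ (fun y => (Ψ y).1) x = 0 ∧ fderiv ℝ (fun y => (Ψ y).2) x = 0 ∧ ω x = 0 := by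
    intro x hx
    obtain ⟨hxΨ, hxω⟩ := hout x hx
    have hsub1 : tsupport (fun y => (Ψ y).1) ⊆ tsupport Ψ :=
      closure_mono (Function.support_subset_iff.mpr fun y hy =>
        Function.mem_support.mpr fun h0 => hy (by rw [h0]; rfl))
    have hsub2 : tsupport (fun y => (Ψ y).2) ⊆ tsupport Ψ :=
      closure_mono (Function.support_subset_iff.mpr fun y hy =>
        Function.mem_support.mpr fun h0 => hy (by rw [h0]; rfl))
    refine ⟨image_eq_zero_of_notMem_tsupport hxΨ, ?_, ?_, image_eq_zero_of_notMem_tsupport hxω⟩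
    · by_contra hne
      exact hxΨ (hsub1 (support_fderiv_subset ℝ (Function.mem_support.mpr hne)))
    · by_contra hne
      exact hxΨ (hsub2 (support_fderiv_subset ℝ (Function.mem_support.mpr hne)))
  have h0all : ∀ x : ℝ × ℝ, R ^ 2 ≤ x.1 ^ 2 + x.2 ^ 2 → V₁ x = 0 ∧ V₂ x = 0 ∧ g x = 0 := by
    intro x hx
    obtain ⟨hΨx, hd1, hd2, hωx⟩ := hΨ0 x hx
    have hΨx1 : (Ψ x).1 = 0 := by rw [hΨx]; rfl
    have hΨx2 : (Ψ x).2 = 0 := by rw [hΨx]; rfl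
    have hf0 : f x = 0 := by simp only [hfdef]; rw [hΨx1, hΨx2]; ring
    refine ⟨?_, ?_, ?_⟩
    · simp only [hV₁def]; rw [hf0, hΨx1]; ring
    · simp only [hV₂def]; rw [hf0, hΨx2]; ring
    · simp only [hgdef]; rw [hf0, hd1, hd2, hωx]
      simp
  -- the divergence identity
  have hdV : ∀ x : ℝ × ℝ, 1 < x.1 ^ 2 + x.2 ^ 2 →
      HasFDerivAt V₁ (fderiv ℝ V₁ x) x ∧ HasFDerivAt V₂ (fderiv ℝ V₂ x) x ∧
      fderiv ℝ V₁ x (1, 0) + fderiv ℝ V₂ x (0, 1) = g x := by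
    intro x hx
    have hu1 := hu1d x hx
    have hu2 := hu2d x hx
    have hΨd1 := hΨ1d x
    have hΨd2 := hΨ2d x
    have hfd : HasFDerivAt f _ x := (hu1.mul hΨd2.neg).add (hu2.mul hΨd1)
    have hed : HasFDerivAt e _ x := ((hu1.mul hu1).add (hu2.mul hu2)).const_mul (1/2 : ℝ)
    have hV₁d : HasFDerivAt V₁ _ x := (hfd.mul hu2.neg).add (hed.mul hΨd1)
    have hV₂d : HasFDerivAt V₂ _ x := (hfd.mul hu1).add (hed.mul hΨd2)
    refine ⟨hV₁d.fderiv ▸ hV₁d, hV₂d.fderiv ▸ hV₂d, ?_⟩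
    rw [hV₁d.fderiv, hV₂d.fderiv]
    have h1 := hudiv x (le_of_lt hx)
    have h2 := hucurl x (le_of_lt hx)
    have h3 := hΨdiv x (le_of_lt hx)
    simp only [hgdef, hfdef, hedef, ContinuousLinearMap.add_apply,
      ContinuousLinearMap.smul_apply, ContinuousLinearMap.neg_apply, smul_eq_mul, Pi.neg_apply]
    rw [clm_expand' (fderiv ℝ (fun y => (Ψ y).1) x) (u' x),
        clm_expand' (fderiv ℝ (fun y => (Ψ y).2) x) (u' x)]
    linear_combination ((Ψ x).1 * (u' x).1 + (Ψ x).2 * (u' x).2) * h1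
      + (-((u' x).1 * (-(Ψ x).2) + (u' x).2 * (Ψ x).1)) * h2
      + (-(1/2) * ((u' x).1 * (u' x).1 + (u' x).2 * (u' x).2)) * h3
  -- divergence theorem
  have hdiv_thm : (∫ x in S, g x) = -∫ θ in (0:ℝ)..(2 * π),
      (V₁ (Real.cos θ, Real.sin θ) * Real.cos θ
        + V₂ (Real.cos θ, Real.sin θ) * Real.sin θ) :=
    ext_div V₁ V₂ g (fun x => fderiv ℝ V₁ x) (fun x => fderiv ℝ V₂ x) R hR
      hV₁c hV₂c hgc hgm (fun x hx => (hdV x hx).1) (fun x hx => (hdV x hx).2.1)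
      (fun x hx => (hdV x hx).2.2) h0all
  -- integrability on S
  have hRpos : (0:ℝ) < R := lt_trans one_pos hR
  have hgInt : IntegrableOn g S := integrableOn_S_helper g hSclosed hgm hgc R hRpos
    (fun x hx => (h0all x hx).2.2)
  have hωfInt : IntegrableOn (fun x => ω x * f x) S := integrableOn_S_helper _ hSclosed
    (hωsmooth.continuous.measurable.mul hfm) (hωsmooth.continuous.continuousOn.mul hfc) R hRpos
    (fun x hx => by rw [(hΨ0 x hx).2.2.2]; ring)
  -- split the left-hand side
  have hLHS : (∫ x in S, ((u x).1 * fderiv ℝ (fun y => (Ψ y).1) x (u x)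
      + (u x).2 * fderiv ℝ (fun y => (Ψ y).2) x (u x)))
      = (∫ x in S, g x) + ∫ x in S, ω x * f x := by
    rw [← integral_add hgInt hωfInt]
    refine setIntegral_congr_fun hSm fun x hx => ?_
    simp only [hgdef, hfdef]
    rw [hu'eq x hx]
    ring
  have hωterm : (∫ x in S, ω x * f x)
      = ∫ x in S, ω x * ((u x).1 * (-(Ψ x).2) + (u x).2 * (Ψ x).1) := by
    refine setIntegral_congr_fun hSm fun x hx => ?_
    simp only [hfdef]
    rw [hu'eq x hx]
  -- the boundary term
  have hbdry : (-∫ θ in (0:ℝ)..(2 * π), (V₁ (Real.cos θ, Real.sin θ) * Real.cos θ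
        + V₂ (Real.cos θ, Real.sin θ) * Real.sin θ))
      = -(1/2) * ∫ θ in (0:ℝ)..(2 * π), ((u (Real.cos θ, Real.sin θ)).1 * Real.sin θ
          - (u (Real.cos θ, Real.sin θ)).2 * Real.cos θ) ^ 2
          * (-((Ψ (Real.cos θ, Real.sin θ)).1 * Real.cos θ
             + (Ψ (Real.cos θ, Real.sin θ)).2 * Real.sin θ)) := by
    rw [← intervalIntegral.integral_const_mul, ← intervalIntegral.integral_neg]
    refine intervalIntegral.integral_congr fun θ _ => ?_
    have h1 : Real.cos θ ^ 2 + Real.sin θ ^ 2 = 1 := cos_sq_add_sin_sq θ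
    have hxS : (Real.cos θ, Real.sin θ) ∈ S := le_of_eq h1.symm
    have hT : (u (Real.cos θ, Real.sin θ)).1 * Real.cos θ
        + (u (Real.cos θ, Real.sin θ)).2 * Real.sin θ = 0 :=
      hutang (Real.cos θ, Real.sin θ) h1
    simp only [hV₁def, hV₂def, hfdef, hedef]
    rw [hu'eq (Real.cos θ, Real.sin θ) hxS]
    linear_combination
      (-(((u (Real.cos θ, Real.sin θ)).1 * Real.sin θ
            - (u (Real.cos θ, Real.sin θ)).2 * Real.cos θ)
          * ((Ψ (Real.cos θ, Real.sin θ)).1 * Real.sin θ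
            - (Ψ (Real.cos θ, Real.sin θ)).2 * Real.cos θ)
        + (1/2) * ((Ψ (Real.cos θ, Real.sin θ)).1 * Real.cos θ
            + (Ψ (Real.cos θ, Real.sin θ)).2 * Real.sin θ)
          * ((u (Real.cos θ, Real.sin θ)).1 * Real.cos θ
            + (u (Real.cos θ, Real.sin θ)).2 * Real.sin θ))) * hT
      + (((u (Real.cos θ, Real.sin θ)).1 * Real.sin θ
            - (u (Real.cos θ, Real.sin θ)).2 * Real.cos θ)
          * ((u (Real.cos θ, Real.sin θ)).2 * (Ψ (Real.cos θ, Real.sin θ)).1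
            - (u (Real.cos θ, Real.sin θ)).1 * (Ψ (Real.cos θ, Real.sin θ)).2)
        + (1/2) * ((u (Real.cos θ, Real.sin θ)).1 ^ 2 + (u (Real.cos θ, Real.sin θ)).2 ^ 2)
          * ((Ψ (Real.cos θ, Real.sin θ)).1 * Real.cos θ
            + (Ψ (Real.cos θ, Real.sin θ)).2 * Real.sin θ)) * h1
  rw [hLHS, hdiv_thm, hbdry, hωterm]
end
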